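/- arXiv:1509.07653 — 7 statements merged into one kernel-verified Lean document; each statement's English description precedes it below -/
import Mathlib

section
/- For every positive integer N, the polynomial identity ∑_{n=1}^{N} (-1)^n * C(N,n) * t^n / n = ∑_{n=1}^{N} ((1-t)^n - 1) / n holds in ℚ[t]. -/
/-!
Induct on `N`. By Pascal's rule and absorption,
`(C(N+1,n) - C(N,n)) / n = C(N,n-1) / n = C(N+1,n) / (N+1)`, so passing from `N` to `N + 1`
adds `(1/(N+1)) ∑_{n=1}^{N+1} (-1)^n C(N+1,n) t^n = ((1-t)^(N+1) - 1) / (N+1)` to the left side,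
which is exactly the new term on the right.
-/

open Polynomial Finset

theorem Polynomial.one_sub_X_pow_sub_one {R : Type*} [CommRing R] (n : ℕ) :
    (1 - X : R[X]) ^ n - 1 = ∑ k ∈ Icc 1 n, C ((-1 : R) ^ k * n.choose k) * X ^ k := by
  rw [show (1 - X : R[X]) = -X + 1 by ring, add_pow, range_eq_Ico,
    sum_eq_sum_Ico_succ_bot n.add_one_pos, zero_add, Ico_add_one_right_eq_Icc]
  simp only [pow_zero, one_pow, mul_one, Nat.choose_zero_right, Nat.cast_one, add_sub_cancel_left]
  refine sum_congr rfl fun k _ => ?_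
  simp only [neg_pow (X : R[X]), C_mul, C_pow, C_neg, C_1, map_natCast]
  ring

theorem Nat.cast_choose_succ_succ_sub_div {K : Type*} [Field K] [CharZero K] (N k : ℕ) :
    (((N + 1).choose (k + 1) : K) - N.choose (k + 1)) / (k + 1)
      = (N + 1).choose (k + 1) / (N + 1) := by
  have pascal : ((N + 1).choose (k + 1) : K) - N.choose (k + 1) = N.choose k := by
    rw [Nat.choose_succ_succ' N k]; push_cast; ring
  rw [pascal, div_eq_div_iff (Nat.cast_add_one_ne_zero k) (Nat.cast_add_one_ne_zero N)]
  exact_mod_cast (mul_comm _ _).trans (Nat.add_one_mul_choose_eq N k)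

theorem Polynomial.sum_Icc_choose_succ_div_mul_X_pow {K : Type*} [Field K] [CharZero K] (N : ℕ) :
    ∑ n ∈ Icc 1 (N + 1), C ((-1 : K) ^ n * ((N + 1).choose n : K) / n) * X ^ n
      = ∑ n ∈ Icc 1 N, C ((-1 : K) ^ n * (N.choose n : K) / n) * X ^ n
        + C (1 / ((N + 1 : ℕ) : K)) * ((1 - X) ^ (N + 1) - 1) := by
  -- the new `n = N + 1` term vanishes since `C(N, N+1) = 0`
  have extend : ∑ n ∈ Icc 1 N, C ((-1 : K) ^ n * (N.choose n : K) / n) * X ^ n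
      = ∑ n ∈ Icc 1 (N + 1), C ((-1 : K) ^ n * (N.choose n : K) / n) * X ^ n := by
    simp [sum_Icc_succ_top (Nat.le_add_left 1 N)]
  rw [extend, one_sub_X_pow_sub_one, mul_sum, ← sum_add_distrib]
  refine sum_congr rfl fun n hn => ?_
  obtain ⟨k, rfl⟩ : ∃ k, n = k + 1 := Nat.exists_eq_add_one.2 (mem_Icc.1 hn).1
  rw [← mul_assoc, ← C_mul, ← add_mul, ← C_add]
  congr 2
  push_cast
  linear_combination (-1 : K) ^ (k + 1) * Nat.cast_choose_succ_succ_sub_div (K := K) N k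

theorem euler_poly_identity_left_general (N : ℕ) :
    ∑ n ∈ Finset.Icc 1 N,
        Polynomial.C ((-1 : ℚ) ^ n * (N.choose n : ℚ) / n) * Polynomial.X ^ n
      = ∑ n ∈ Finset.Icc 1 N,
          Polynomial.C ((1 : ℚ) / n) * ((1 - Polynomial.X) ^ n - 1) := by
  induction N with
  | zero => rfl
  | succ N ih =>
    rw [sum_Icc_choose_succ_div_mul_X_pow, ih]
    exact (sum_Icc_succ_top (Nat.le_add_left 1 N) _).symm

/-- For every positive integer `N`:
`∑_{n=1}^{N} (-1)^n * C(N,n) * t^n / n = ∑_{n=1}^{N} ((1-t)^n - 1) / n` in `ℚ[t]`. -/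
theorem euler_poly_identity_left (N : ℕ) (hN : 0 < N) :
    ∑ n ∈ Finset.Icc 1 N,
        Polynomial.C ((-1 : ℚ) ^ n * (N.choose n : ℚ) / n) * Polynomial.X ^ n
      = ∑ n ∈ Finset.Icc 1 N,
          Polynomial.C ((1 : ℚ) / n) * ((1 - Polynomial.X) ^ n - 1) :=
  euler_poly_identity_left_general N
end

section
/- Let k₁, k₂ be positive integers and N a positive integer. Then in ℚ[t] one has ∑_{N ≥ n₁ ≥ n₂ ≥ 1} (-1)^{n₁} C(N,n₁) t^{n₂} / (n₁^{k₁} n₂^{k₂}) = ∑_{N ≥ m₁ ≥ ⋯ ≥ m_{k₁+k₂-1} ≥ 1} ((1-t)^{m_{k₁+k₂-1}} - 1) / (m₁ ⋯ m_{k₁-1} · m_{k₁}² · m_{k₁+1} ⋯ m_{k₁+k₂-1}), the right-hand side being the truncated sum associated to the Hoffman dual index (k₁,k₂)^∨ = ({1}^{k₁-1}, 2, {1}^{k₂-1}). -/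
open Finset Polynomial

namespace HDaux

/-- Hockey-stick: `∑_{m=1}^N C(m,j)/m = C(N,j)/j` for `j ≥ 1`. -/
lemma hockey (j : ℕ) (hj : 1 ≤ j) (N : ℕ) :
    ∑ m ∈ Icc 1 N, (m.choose j : ℚ) / m = (N.choose j : ℚ) / j := by
  obtain ⟨j', rfl⟩ : ∃ j', j = j' + 1 := ⟨j - 1, by omega⟩
  induction N with
  | zero => simp
  | succ N ih =>
      rw [Finset.sum_Icc_succ_top (by omega), ih]
      have key : ((N:ℚ) + 1) * (N.choose j' : ℚ) = ((N+1).choose (j'+1) : ℚ) * ((j':ℚ)+1) := by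
        exact_mod_cast congrArg (Nat.cast (R := ℚ)) (Nat.add_one_mul_choose_eq N j')
      have pascal : ((N+1).choose (j'+1) : ℚ) = (N.choose j' : ℚ) + (N.choose (j'+1) : ℚ) := by
        exact_mod_cast congrArg (Nat.cast (R := ℚ)) (Nat.choose_succ_succ N j')
      have hj0 : ((j':ℚ)+1) ≠ 0 := by positivity
      have hN0 : ((N:ℚ)+1) ≠ 0 := by positivity
      push_cast
      field_simp
      linear_combination -key - ((N:ℚ)+1)*pascal


lemma alt_front (M j : ℕ) :
    ∑ n ∈ range (j+1), (-1:ℚ)^n * ((M+1).choose n : ℚ) = (-1:ℚ)^j * (M.choose j : ℚ) := by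
  induction j with
  | zero => simp
  | succ j ih =>
      rw [Finset.sum_range_succ, ih, Nat.choose_succ_succ M j]
      push_cast
      ring

lemma alt_tail (M j : ℕ) :
    ∑ n ∈ Icc (j+1) (M+1), (-1:ℚ)^n * ((M+1).choose n : ℚ) = (-1:ℚ)^(j+1) * (M.choose j : ℚ) := by
  rcases le_or_gt (j+1) (M+1) with h | h
  · have total := alt_front M (M+1)
    rw [Nat.choose_succ_self, Nat.cast_zero, mul_zero] at total
    have front := alt_front M j
    have split : (∑ n ∈ range (j+1), (-1:ℚ)^n * ((M+1).choose n : ℚ))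
        + ∑ n ∈ Ico (j+1) (M+2), (-1:ℚ)^n * ((M+1).choose n : ℚ)
        = ∑ n ∈ range (M+2), (-1:ℚ)^n * ((M+1).choose n : ℚ) := by
      rw [range_eq_Ico, range_eq_Ico]
      exact Finset.sum_Ico_consecutive (fun n => (-1:ℚ)^n * ((M+1).choose n : ℚ)) (m := 0) (n := j+1) (k := M+2) (by omega) (by omega)
    have hIcc : Icc (j+1) (M+1) = Ico (j+1) (M+2) := by
      ext x; simp [Nat.lt_succ_iff]
    rw [hIcc]
    rw [total, front] at split
    linear_combination split
  · rw [Finset.Icc_eq_empty (by omega), Nat.choose_eq_zero_of_lt (by omega)]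
    simp


/-- `F k j N = ∑_{n=1}^N [j ≤ n] (-1)^n C(N,n)/n^k`. -/
def F (k j N : ℕ) : ℚ :=
  ∑ n ∈ Icc 1 N, if j ≤ n then (-1:ℚ)^n * (N.choose n : ℚ) / (n:ℚ)^k else 0

/-- `G p j N` : nested harmonic sums of depth `p+1`, innermost weight 2 with `C(·,j)`. -/
def G : ℕ → ℕ → ℕ → ℚ
  | 0, j, N => ∑ m ∈ Icc 1 N, (m.choose j : ℚ) / (m:ℚ)^2
  | (p+1), j, N => ∑ m ∈ Icc 1 N, (1/(m:ℚ)) * G p j m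

lemma F_one (j : ℕ) (hj : 1 ≤ j) (N : ℕ) : F 1 j N = (-1:ℚ)^j * j * G 0 j N := by
  obtain ⟨j', rfl⟩ : ∃ j', j = j' + 1 := ⟨j - 1, by omega⟩
  induction N with
  | zero => simp [F, G]
  | succ N ih =>
      have hFstep : F 1 (j'+1) (N+1)
          = F 1 (j'+1) N + (-1:ℚ)^(j'+1) * (N.choose j' : ℚ) / ((N:ℚ)+1) := by
        have main : ∀ n ∈ Icc 1 (N+1),
            (if j'+1 ≤ n then (-1:ℚ)^n * ((N+1).choose n : ℚ)/(n:ℚ)^1 else 0)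
            = (if j'+1 ≤ n then (-1:ℚ)^n * (N.choose n : ℚ)/(n:ℚ)^1 else 0)
              + (if j'+1 ≤ n then (-1:ℚ)^n * ((N+1).choose n : ℚ)/((N:ℚ)+1) else 0) := by
          intro n hn
          simp only [mem_Icc] at hn
          obtain ⟨n', rfl⟩ : ∃ n', n = n'+1 := ⟨n-1, by omega⟩
          split_ifs with h
          · have key : ((N:ℚ)+1) * (N.choose n' : ℚ) = ((N+1).choose (n'+1) : ℚ) * ((n':ℚ)+1) := by
              exact_mod_cast congrArg (Nat.cast (R := ℚ)) (Nat.add_one_mul_choose_eq N n')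
            have pascal : ((N+1).choose (n'+1) : ℚ)
                = (N.choose n' : ℚ) + (N.choose (n'+1) : ℚ) := by
              exact_mod_cast congrArg (Nat.cast (R := ℚ)) (Nat.choose_succ_succ N n')
            have h1 : ((n':ℚ)+1) ≠ 0 := by positivity
            have h2 : ((N:ℚ)+1) ≠ 0 := by positivity
            push_cast
            field_simp
            linear_combination key + ((N:ℚ)+1)*pascal
          · simp
        have expand : F 1 (j'+1) (N+1)
            = (∑ n ∈ Icc 1 (N+1), if j'+1 ≤ n then (-1:ℚ)^n * (N.choose n : ℚ)/(n:ℚ)^1 else 0)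
              + ∑ n ∈ Icc 1 (N+1),
                  (if j'+1 ≤ n then (-1:ℚ)^n * ((N+1).choose n : ℚ)/((N:ℚ)+1) else 0) := by
          rw [F, ← Finset.sum_add_distrib]
          exact Finset.sum_congr rfl main
        rw [expand]
        congr 1
        · rw [Finset.sum_Icc_succ_top (by omega : 1 ≤ N+1), Nat.choose_succ_self]
          simp [F]
        · have hfil : ∑ n ∈ Icc 1 (N+1),
              (if j'+1 ≤ n then (-1:ℚ)^n * ((N+1).choose n : ℚ)/((N:ℚ)+1) else 0)
              = ∑ n ∈ Icc (j'+1) (N+1), (-1:ℚ)^n * ((N+1).choose n : ℚ)/((N:ℚ)+1) := by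
            rw [← Finset.sum_filter]
            congr 1
            ext x; simp only [mem_filter, mem_Icc]; omega
          rw [hfil]
          have halt := alt_tail N j'
          rw [← Finset.sum_div, halt]
      have hGstep : G 0 (j'+1) (N+1)
          = G 0 (j'+1) N + ((N+1).choose (j'+1) : ℚ) / ((N:ℚ)+1)^2 := by
        rw [G, Finset.sum_Icc_succ_top (by omega)]
        rw [show G 0 (j'+1) N = ∑ m ∈ Icc 1 N, (m.choose (j'+1) : ℚ) / (m:ℚ)^2 from rfl]
        push_cast
        ring
      rw [hFstep, hGstep, ih]
      have key : ((N:ℚ) + 1) * (N.choose j' : ℚ) = ((N+1).choose (j'+1) : ℚ) * ((j':ℚ)+1) := by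
        exact_mod_cast congrArg (Nat.cast (R := ℚ)) (Nat.add_one_mul_choose_eq N j')
      have hN0 : ((N:ℚ)+1) ≠ 0 := by positivity
      push_cast
      field_simp
      linear_combination key


lemma F_rec (k j : ℕ) (hj : 1 ≤ j) (N : ℕ) :
    ∑ m ∈ Icc 1 N, (1/(m:ℚ)) * F k j m = F (k+1) j N := by
  have swap : ∑ m ∈ Icc 1 N, ∑ n ∈ Icc 1 m,
        (1/(m:ℚ)) * (if j ≤ n then (-1:ℚ)^n * (m.choose n : ℚ) / (n:ℚ)^k else 0)
      = ∑ n ∈ Icc 1 N, ∑ m ∈ Icc n N,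
        (1/(m:ℚ)) * (if j ≤ n then (-1:ℚ)^n * (m.choose n : ℚ) / (n:ℚ)^k else 0) := by
    exact Finset.sum_comm' (by intro m n; simp only [mem_Icc]; omega)
  have lhs_eq : ∑ m ∈ Icc 1 N, (1/(m:ℚ)) * F k j m
      = ∑ m ∈ Icc 1 N, ∑ n ∈ Icc 1 m,
        (1/(m:ℚ)) * (if j ≤ n then (-1:ℚ)^n * (m.choose n : ℚ) / (n:ℚ)^k else 0) := by
    refine Finset.sum_congr rfl fun m _ => ?_
    rw [F, Finset.mul_sum]
  rw [lhs_eq, swap, F]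
  refine Finset.sum_congr rfl fun n hn => ?_
  simp only [mem_Icc] at hn
  by_cases h : j ≤ n
  · simp only [if_pos h]
    have inner : ∑ m ∈ Icc n N, (1/(m:ℚ)) * ((-1:ℚ)^n * (m.choose n : ℚ) / (n:ℚ)^k)
        = ((-1:ℚ)^n / (n:ℚ)^k) * ∑ m ∈ Icc n N, (m.choose n : ℚ) / m := by
      rw [Finset.mul_sum]
      refine Finset.sum_congr rfl fun m _ => ?_
      ring
    rw [inner]
    have ext_sum : ∑ m ∈ Icc n N, (m.choose n : ℚ) / m = ∑ m ∈ Icc 1 N, (m.choose n : ℚ) / m := by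
      refine Finset.sum_subset ?_ ?_
      · intro x hx
        simp only [mem_Icc] at hx ⊢
        omega
      · intro x hx hx'
        simp only [mem_Icc] at hx hx'
        rw [Nat.choose_eq_zero_of_lt (by omega)]
        simp
    rw [ext_sum, hockey n hn.1 N, pow_succ]
    ring
  · simp only [if_neg h]
    simp

lemma F_G (p j : ℕ) (hj : 1 ≤ j) (N : ℕ) : F (p+1) j N = (-1:ℚ)^j * j * G p j N := by
  induction p generalizing N with
  | zero => exact F_one j hj N
  | succ p ih =>
      rw [← F_rec (p+1) j hj N, G, Finset.mul_sum]
      refine Finset.sum_congr rfl fun m _ => ?_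
      rw [ih m]
      ring


lemma peel {M : Type*} [AddCommMonoid M] (k N : ℕ) (f : (Fin (k+1) → ℕ) → M) :
    ∑ m ∈ Finset.filter (fun m : Fin (k+1) → ℕ => ∀ a b, a ≤ b → m b ≤ m a)
        (Fintype.piFinset fun _ => Finset.Icc 1 N), f m
  = ∑ r ∈ Finset.Icc 1 N,
      ∑ m ∈ Finset.filter (fun m : Fin k → ℕ => ∀ a b, a ≤ b → m b ≤ m a)
        (Fintype.piFinset fun _ => Finset.Icc 1 r), f (Fin.cons r m) := by
  classical
  rw [Finset.sum_sigma']
  refine Finset.sum_nbij' (fun m => ⟨m 0, Fin.tail m⟩)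
    (fun p => Fin.cons p.1 p.2) ?_ ?_ ?_ ?_ ?_
  · intro m hm
    simp only [Finset.mem_filter, Fintype.mem_piFinset, Finset.mem_Icc] at hm
    obtain ⟨hmem, hanti⟩ := hm
    simp only [Finset.mem_sigma, Finset.mem_filter, Fintype.mem_piFinset, Finset.mem_Icc]
    exact ⟨⟨(hmem 0).1, (hmem 0).2⟩,
      fun i => ⟨(hmem i.succ).1, hanti 0 i.succ (Fin.zero_le _)⟩,
      fun a b hab => hanti a.succ b.succ (Fin.succ_le_succ_iff.mpr hab)⟩
  · intro p hp
    simp only [Finset.mem_sigma, Finset.mem_filter, Fintype.mem_piFinset, Finset.mem_Icc] at hp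
    obtain ⟨hr, hmem, hanti⟩ := hp
    simp only [Finset.mem_filter, Fintype.mem_piFinset, Finset.mem_Icc]
    constructor
    · intro i
      rcases Fin.eq_zero_or_eq_succ i with rfl | ⟨i', rfl⟩
      · simpa using hr
      · simp only [Fin.cons_succ]
        exact ⟨(hmem i').1, (hmem i').2.trans hr.2⟩
    · intro a b hab
      rcases Fin.eq_zero_or_eq_succ a with rfl | ⟨a', rfl⟩
      · rcases Fin.eq_zero_or_eq_succ b with rfl | ⟨b', rfl⟩
        · exact le_refl _
        · simp only [Fin.cons_succ, Fin.cons_zero]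
          exact (hmem b').2
      · rcases Fin.eq_zero_or_eq_succ b with rfl | ⟨b', rfl⟩
        · exact ((Fin.succ_pos a').not_ge hab).elim
        · simp only [Fin.cons_succ]
          exact hanti a' b' (by rwa [Fin.succ_le_succ_iff] at hab)
  · intro m hm
    exact Fin.cons_self_tail m
  · intro p hp
    simp [Fin.tail_cons]
  · intro m hm
    rw [Fin.cons_self_tail]

lemma sum_fin_zero {M : Type*} [AddCommMonoid M] (N : ℕ) (f : (Fin 0 → ℕ) → M) :
    ∑ m ∈ Finset.filter (fun m : Fin 0 → ℕ => ∀ a b, a ≤ b → m b ≤ m a)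
        (Fintype.piFinset fun _ => Finset.Icc 1 N), f m = f (fun i => i.elim0) := by
  classical
  have hset : Finset.filter (fun m : Fin 0 → ℕ => ∀ a b, a ≤ b → m b ≤ m a)
        (Fintype.piFinset fun _ => Finset.Icc 1 N) = {fun i => i.elim0} := by
    ext m
    simp only [Finset.mem_filter, Fintype.mem_piFinset, Finset.mem_singleton]
    constructor
    · intro _
      funext i; exact i.elim0
    · intro _
      exact ⟨fun i => i.elim0, fun a => a.elim0⟩
  rw [hset, Finset.sum_singleton]


lemma tail_eval (j : ℕ) (hj : 1 ≤ j) (c : ℕ) :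
    ∀ N : ℕ,
      ∑ m ∈ Finset.filter (fun m : Fin (c+1) → ℕ => ∀ a b, a ≤ b → m b ≤ m a)
          (Fintype.piFinset fun _ => Finset.Icc 1 N),
        (∏ i, 1 / (m i : ℚ)) * ((-1:ℚ)^j * ((m (Fin.last c)).choose j : ℚ))
      = (-1:ℚ)^j * (N.choose j : ℚ) / (j:ℚ)^(c+1) := by
  induction c with
  | zero =>
      intro N
      rw [peel 0 N]
      have step : ∀ r ∈ Icc 1 N,
          (∑ m ∈ Finset.filter (fun m : Fin 0 → ℕ => ∀ a b, a ≤ b → m b ≤ m a)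
            (Fintype.piFinset fun _ => Finset.Icc 1 r),
            (∏ i, 1 / ((Fin.cons r m : Fin 1 → ℕ) i : ℚ)) *
              ((-1:ℚ)^j * (((Fin.cons r m : Fin 1 → ℕ) (Fin.last 0)).choose j : ℚ)))
          = (-1:ℚ)^j * ((r.choose j : ℚ) / r) := by
        intro r _
        rw [sum_fin_zero r]
        have h1 : ((Fin.cons r (fun i => i.elim0) : Fin 1 → ℕ) (Fin.last 0)) = r := rfl
        rw [h1, Fin.prod_univ_one]
        have h2 : ((Fin.cons r (fun i => i.elim0) : Fin 1 → ℕ) 0) = r := rfl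
        rw [h2]
        ring
      rw [Finset.sum_congr rfl step, ← Finset.mul_sum, hockey j hj N]
      rw [pow_one]
      ring
  | succ c ih =>
      intro N
      rw [peel (c+1) N]
      have step : ∀ r ∈ Icc 1 N,
          (∑ m ∈ Finset.filter (fun m : Fin (c+1) → ℕ => ∀ a b, a ≤ b → m b ≤ m a)
            (Fintype.piFinset fun _ => Finset.Icc 1 r),
            (∏ i, 1 / ((Fin.cons r m : Fin (c+2) → ℕ) i : ℚ)) *
              ((-1:ℚ)^j * (((Fin.cons r m : Fin (c+2) → ℕ) (Fin.last (c+1))).choose j : ℚ)))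
          = (1/(r:ℚ)) * ((-1:ℚ)^j * (r.choose j : ℚ) / (j:ℚ)^(c+1)) := by
        intro r _
        rw [← ih r, Finset.mul_sum]
        refine Finset.sum_congr rfl fun m _ => ?_
        rw [← Fin.succ_last, Fin.cons_succ, Fin.prod_univ_succ, Fin.cons_zero]
        have : ∀ i : Fin (c+1), (1:ℚ) / (((Fin.cons r m : Fin (c+2) → ℕ)) i.succ : ℚ) = 1 / (m i : ℚ) := by
          intro i; rw [Fin.cons_succ]
        rw [Finset.prod_congr rfl fun i _ => this i]
        ring
      rw [Finset.sum_congr rfl step]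
      have : ∀ r : ℕ, (1/(r:ℚ)) * ((-1:ℚ)^j * (r.choose j : ℚ) / (j:ℚ)^(c+1))
          = ((-1:ℚ)^j / (j:ℚ)^(c+1)) * ((r.choose j : ℚ) / r) := by
        intro r; ring
      rw [Finset.sum_congr rfl fun r _ => this r, ← Finset.mul_sum, hockey j hj N, pow_succ]
      ring


lemma main_eval (j : ℕ) (hj : 1 ≤ j) (c : ℕ) :
    ∀ p b N : ℕ, p + b = c →
      ∑ m ∈ Finset.filter (fun m : Fin (c+1) → ℕ => ∀ a b, a ≤ b → m b ≤ m a)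
          (Fintype.piFinset fun _ => Finset.Icc 1 N),
        (∏ i, 1 / (m i : ℚ)^(if i.val = p then 2 else 1)) *
          ((-1:ℚ)^j * ((m (Fin.last c)).choose j : ℚ))
      = (-1:ℚ)^j / (j:ℚ)^b * G p j N := by
  induction c with
  | zero =>
      intro p b N hpb
      obtain ⟨rfl, rfl⟩ : p = 0 ∧ b = 0 := by omega
      rw [peel 0 N]
      have step : ∀ r ∈ Icc 1 N,
          (∑ m ∈ Finset.filter (fun m : Fin 0 → ℕ => ∀ a b, a ≤ b → m b ≤ m a)
            (Fintype.piFinset fun _ => Finset.Icc 1 r),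
            (∏ i, 1 / ((Fin.cons r m : Fin 1 → ℕ) i : ℚ)^(if i.val = 0 then 2 else 1)) *
              ((-1:ℚ)^j * (((Fin.cons r m : Fin 1 → ℕ) (Fin.last 0)).choose j : ℚ)))
          = (-1:ℚ)^j * ((r.choose j : ℚ) / (r:ℚ)^2) := by
        intro r _
        rw [sum_fin_zero r]
        have h1 : ((Fin.cons r (fun i => i.elim0) : Fin 1 → ℕ) (Fin.last 0)) = r := rfl
        rw [h1, Fin.prod_univ_one]
        have h2 : ((Fin.cons r (fun i => i.elim0) : Fin 1 → ℕ) 0) = r := rfl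
        rw [h2]
        norm_num
        ring
      rw [Finset.sum_congr rfl step, ← Finset.mul_sum]
      rw [show G 0 j N = ∑ m ∈ Icc 1 N, (m.choose j : ℚ) / (m:ℚ)^2 from rfl]
      norm_num
  | succ c ih =>
      intro p b N hpb
      rw [peel (c+1) N]
      rcases Nat.eq_zero_or_eq_succ_pred p with rfl | hp
      · -- p = 0, b = c+1
        have hb : b = c + 1 := by omega
        subst hb
        have step : ∀ r ∈ Icc 1 N,
            (∑ m ∈ Finset.filter (fun m : Fin (c+1) → ℕ => ∀ a b, a ≤ b → m b ≤ m a)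
              (Fintype.piFinset fun _ => Finset.Icc 1 r),
              (∏ i, 1 / ((Fin.cons r m : Fin (c+2) → ℕ) i : ℚ)^(if i.val = 0 then 2 else 1)) *
                ((-1:ℚ)^j * (((Fin.cons r m : Fin (c+2) → ℕ) (Fin.last (c+1))).choose j : ℚ)))
            = (1/(r:ℚ)^2) * ((-1:ℚ)^j * (r.choose j : ℚ) / (j:ℚ)^(c+1)) := by
          intro r _
          rw [← tail_eval j hj c r, Finset.mul_sum]
          refine Finset.sum_congr rfl fun m _ => ?_
          rw [← Fin.succ_last, Fin.cons_succ, Fin.prod_univ_succ, Fin.cons_zero]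
          have hz : ((0 : Fin (c+2)).val = 0) = True := by simp
          have hprod : ∀ i : Fin (c+1),
              (1:ℚ) / (((Fin.cons r m : Fin (c+2) → ℕ)) i.succ : ℚ)^(if (i.succ : Fin (c+2)).val = 0 then 2 else 1)
              = 1 / (m i : ℚ) := by
            intro i
            rw [Fin.cons_succ]
            simp [Fin.val_succ]
          rw [Finset.prod_congr rfl fun i _ => hprod i]
          simp only [Fin.val_zero, if_true, eq_self_iff_true]
          ring
        rw [Finset.sum_congr rfl step]
        have hrw : ∀ r : ℕ, (1/(r:ℚ)^2) * ((-1:ℚ)^j * (r.choose j : ℚ) / (j:ℚ)^(c+1))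
            = ((-1:ℚ)^j / (j:ℚ)^(c+1)) * ((r.choose j : ℚ) / (r:ℚ)^2) := by
          intro r; ring
        rw [Finset.sum_congr rfl fun r _ => hrw r, ← Finset.mul_sum]
        rw [show G 0 j N = ∑ m ∈ Icc 1 N, (m.choose j : ℚ) / (m:ℚ)^2 from rfl]
      · -- p = p'+1
        obtain ⟨p', rfl⟩ : ∃ p', p = p' + 1 := ⟨p - 1, by omega⟩
        have hpb' : p' + b = c := by omega
        have step : ∀ r ∈ Icc 1 N,
            (∑ m ∈ Finset.filter (fun m : Fin (c+1) → ℕ => ∀ a b, a ≤ b → m b ≤ m a)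
              (Fintype.piFinset fun _ => Finset.Icc 1 r),
              (∏ i, 1 / ((Fin.cons r m : Fin (c+2) → ℕ) i : ℚ)^(if i.val = p'+1 then 2 else 1)) *
                ((-1:ℚ)^j * (((Fin.cons r m : Fin (c+2) → ℕ) (Fin.last (c+1))).choose j : ℚ)))
            = (1/(r:ℚ)) * ((-1:ℚ)^j / (j:ℚ)^b * G p' j r) := by
          intro r _
          rw [← ih p' b r hpb', Finset.mul_sum]
          refine Finset.sum_congr rfl fun m _ => ?_
          rw [← Fin.succ_last, Fin.cons_succ, Fin.prod_univ_succ, Fin.cons_zero]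
          have hprod : ∀ i : Fin (c+1),
              (1:ℚ) / (((Fin.cons r m : Fin (c+2) → ℕ)) i.succ : ℚ)^(if (i.succ : Fin (c+2)).val = p'+1 then 2 else 1)
              = 1 / (m i : ℚ)^(if i.val = p' then 2 else 1) := by
            intro i
            rw [Fin.cons_succ]
            simp only [Fin.val_succ, Nat.add_right_cancel_iff]
          rw [Finset.prod_congr rfl fun i _ => hprod i]
          have : ((0 : Fin (c+2)).val = p' + 1) = False := by simp
          rw [if_neg (by simp)]
          ring
        rw [Finset.sum_congr rfl step]
        rw [show G (p'+1) j N = ∑ m ∈ Icc 1 N, (1/(m:ℚ)) * G p' j m from rfl, Finset.mul_sum]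
        refine Finset.sum_congr rfl fun r _ => ?_
        ring


lemma coeff_one_sub_X_pow (m j : ℕ) :
    ((1 - Polynomial.X : Polynomial ℚ) ^ m).coeff j = (-1:ℚ)^j * (m.choose j : ℚ) := by
  have expand : (1 - Polynomial.X : Polynomial ℚ) ^ m
      = ∑ i ∈ range (m+1), Polynomial.C ((-1:ℚ)^i * (m.choose i : ℚ)) * Polynomial.X ^ i := by
    rw [sub_eq_add_neg, add_comm, add_pow]
    refine Finset.sum_congr rfl fun i _ => ?_
    rw [neg_pow]
    simp only [map_mul, Polynomial.C_neg, Polynomial.C_1, one_pow, mul_one]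
    push_cast
    ring_nf
    simp [Polynomial.C_eq_natCast]
    ring
  rw [expand, Polynomial.finset_sum_coeff]
  have hterm : ∀ i ∈ range (m+1),
      (Polynomial.C ((-1:ℚ)^i * (m.choose i : ℚ)) * Polynomial.X ^ i).coeff j
      = if j = i then (-1:ℚ)^i * (m.choose i : ℚ) else 0 := by
    intro i _
    rw [Polynomial.coeff_C_mul, Polynomial.coeff_X_pow]
    split_ifs <;> simp
  rw [Finset.sum_congr rfl hterm, Finset.sum_ite_eq]
  split_ifs with h
  · rfl
  · rw [Nat.choose_eq_zero_of_lt (by simp at h; omega)]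
    simp


lemma reindex {M : Type*} [AddCommMonoid M] {n n' : ℕ} (h : n = n') (N : ℕ)
    (f : (Fin n → ℕ) → M) :
    ∑ m ∈ Finset.filter (fun m : Fin n → ℕ => ∀ a b, a ≤ b → m b ≤ m a)
        (Fintype.piFinset fun _ => Finset.Icc 1 N), f m
    = ∑ m ∈ Finset.filter (fun m : Fin n' → ℕ => ∀ a b, a ≤ b → m b ≤ m a)
        (Fintype.piFinset fun _ => Finset.Icc 1 N), f (fun i => m (Fin.cast h i)) := by
  subst h
  rfl

end HDaux



/-- Depth-2 case of the generalized Euler identity: for positive integers `k₁, k₂, N`,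
`∑_{N ≥ n₁ ≥ n₂ ≥ 1} (-1)^{n₁} C(N,n₁) t^{n₂} / (n₁^{k₁} n₂^{k₂})`
equals the truncated sum associated to the Hoffman dual index
`(k₁,k₂)^∨ = ({1}^{k₁-1}, 2, {1}^{k₂-1})`:
`∑_{N ≥ m₁ ≥ ⋯ ≥ m_{k₁+k₂-1} ≥ 1} ((1-t)^{m_{k₁+k₂-1}} - 1) /
   (m₁ ⋯ m_{k₁-1} · m_{k₁}² · m_{k₁+1} ⋯ m_{k₁+k₂-1})` in `ℚ[t]`. -/
theorem hoffman_dual_depth_two (N k₁ k₂ : ℕ) (hN : 0 < N) (h1 : 0 < k₁) (h2 : 0 < k₂) :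
    ∑ n₁ ∈ Finset.Icc 1 N, ∑ n₂ ∈ Finset.Icc 1 n₁,
        Polynomial.C ((-1 : ℚ) ^ n₁ * (N.choose n₁ : ℚ) / ((n₁ : ℚ) ^ k₁ * (n₂ : ℚ) ^ k₂)) *
          Polynomial.X ^ n₂
      = ∑ m ∈ Finset.filter
            (fun m : Fin (k₁ + k₂ - 1) → ℕ =>
              ∀ a b : Fin (k₁ + k₂ - 1), a ≤ b → m b ≤ m a)
            (Fintype.piFinset fun _ => Finset.Icc 1 N),
          Polynomial.C (∏ i : Fin (k₁ + k₂ - 1),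
              1 / (m i : ℚ) ^ (if i.val = k₁ - 1 then 2 else 1)) *
            ((1 - Polynomial.X) ^ (m ⟨k₁ + k₂ - 2, by omega⟩) - 1) := by
  classical
  obtain ⟨a, rfl⟩ : ∃ a, k₁ = a + 1 := ⟨k₁ - 1, by omega⟩
  obtain ⟨b, rfl⟩ : ∃ b, k₂ = b + 1 := ⟨k₂ - 1, by omega⟩
  have hcast : a + 1 + (b + 1) - 1 = a + b + 1 := by omega
  rw [HDaux.reindex hcast]
  have hsummand : ∀ m : Fin (a+b+1) → ℕ,
      (Polynomial.C (∏ i : Fin (a+1+(b+1)-1),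
          1 / ((m (Fin.cast hcast i) : ℕ) : ℚ) ^ (if i.val = a+1-1 then 2 else 1)) *
        ((1 - Polynomial.X) ^ (m (Fin.cast hcast ⟨a+1+(b+1)-2, by omega⟩)) - 1))
      = Polynomial.C (∏ i : Fin (a+b+1), 1 / (m i : ℚ) ^ (if i.val = a then 2 else 1)) *
        ((1 - Polynomial.X) ^ (m (Fin.last (a+b))) - 1) := by
    intro m
    congr 1
    · apply congrArg
      apply Fintype.prod_equiv (finCongr hcast)
      intro i
      rfl
    · have : (Fin.cast hcast ⟨a+1+(b+1)-2, by omega⟩ : Fin (a+b+1)) = Fin.last (a+b) := by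
        apply Fin.ext
        simp [Fin.last]
        omega
      rw [this]
  rw [Finset.sum_congr rfl fun m _ => hsummand m]
  apply Polynomial.ext
  intro j
  rw [Polynomial.finset_sum_coeff, Polynomial.finset_sum_coeff]
  have hL : ∀ n₁ ∈ Finset.Icc 1 N,
      (∑ n₂ ∈ Finset.Icc 1 n₁,
        Polynomial.C ((-1 : ℚ) ^ n₁ * (N.choose n₁ : ℚ) / ((n₁ : ℚ) ^ (a+1) * (n₂ : ℚ) ^ (b+1))) *
          Polynomial.X ^ n₂).coeff j
      = if j ∈ Finset.Icc 1 n₁ then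
          (-1 : ℚ) ^ n₁ * (N.choose n₁ : ℚ) / ((n₁ : ℚ) ^ (a+1) * (j : ℚ) ^ (b+1)) else 0 := by
    intro n₁ _
    rw [Polynomial.finset_sum_coeff]
    have : ∀ n₂ ∈ Finset.Icc 1 n₁,
        (Polynomial.C ((-1 : ℚ) ^ n₁ * (N.choose n₁ : ℚ) / ((n₁ : ℚ) ^ (a+1) * (n₂ : ℚ) ^ (b+1))) *
          Polynomial.X ^ n₂).coeff j
        = if j = n₂ then
            (-1 : ℚ) ^ n₁ * (N.choose n₁ : ℚ) / ((n₁ : ℚ) ^ (a+1) * (n₂ : ℚ) ^ (b+1)) else 0 := by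
      intro n₂ _
      rw [Polynomial.coeff_C_mul, Polynomial.coeff_X_pow]
      split_ifs <;> simp
    rw [Finset.sum_congr rfl this, Finset.sum_ite_eq]
  have hR : ∀ m ∈ Finset.filter
        (fun m : Fin (a + b + 1) → ℕ => ∀ a b, a ≤ b → m b ≤ m a)
        (Fintype.piFinset fun _ => Finset.Icc 1 N),
      (Polynomial.C (∏ i : Fin (a + b + 1), 1 / (m i : ℚ) ^ (if i.val = a then 2 else 1)) *
        ((1 - Polynomial.X) ^ (m (Fin.last (a+b))) - 1)).coeff j
      = (∏ i : Fin (a + b + 1), 1 / (m i : ℚ) ^ (if i.val = a then 2 else 1)) *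
          ((-1:ℚ)^j * ((m (Fin.last (a+b))).choose j : ℚ) - if j = 0 then 1 else 0) := by
    intro m _
    rw [Polynomial.coeff_C_mul, Polynomial.coeff_sub, HDaux.coeff_one_sub_X_pow,
      Polynomial.coeff_one]
  rw [Finset.sum_congr rfl hL, Finset.sum_congr rfl hR]
  rcases Nat.eq_zero_or_pos j with rfl | hj
  · rw [Finset.sum_eq_zero, Finset.sum_eq_zero]
    · intro m _
      simp [Nat.choose_zero_right]
    · intro n₁ hn₁
      rw [if_neg (by simp)]
  · have hLHS : ∑ n₁ ∈ Finset.Icc 1 N,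
        (if j ∈ Finset.Icc 1 n₁ then
          (-1 : ℚ) ^ n₁ * (N.choose n₁ : ℚ) / ((n₁ : ℚ) ^ (a+1) * (j : ℚ) ^ (b+1)) else 0)
        = (1/(j:ℚ)^(b+1)) * HDaux.F (a+1) j N := by
      rw [HDaux.F, Finset.mul_sum]
      refine Finset.sum_congr rfl fun n₁ hn₁ => ?_
      simp only [Finset.mem_Icc]
      split_ifs with h h' h'
      · ring
      · omega
      · omega
      · ring
    have hRHS : ∑ m ∈ Finset.filter
          (fun m : Fin (a + b + 1) → ℕ => ∀ a b, a ≤ b → m b ≤ m a)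
          (Fintype.piFinset fun _ => Finset.Icc 1 N),
        (∏ i : Fin (a + b + 1), 1 / (m i : ℚ) ^ (if i.val = a then 2 else 1)) *
          ((-1:ℚ)^j * ((m (Fin.last (a+b))).choose j : ℚ) - if j = 0 then 1 else 0)
        = (-1:ℚ)^j / (j:ℚ)^b * HDaux.G a j N := by
      rw [← HDaux.main_eval j hj (a+b) a b N rfl]
      refine Finset.sum_congr rfl fun m _ => ?_
      rw [if_neg (by omega)]
      ring
    rw [hLHS, hRHS, HDaux.F_G a j hj N]
    have hj0 : ((j:ℚ)) ≠ 0 := by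
      have : (0:ℚ) < j := by exact_mod_cast hj
      exact ne_of_gt this
    rw [pow_succ]
    field_simp
end

section
/- Let N be a positive integer and k₁, k₂ positive integers. Then ∑_{j=0}^{2} (-1)^j · A_j · B_j = 0, where A_0 = 1, A_1 = ∑_{N ≥ n > 0} t₁^n/n^{k₁}, A_2 = ∑_{N ≥ n₁ > n₂ > 0} t₁^{n₁} t₂^{n₂}/(n₁^{k₁} n₂^{k₂}), B_0 = ∑_{N ≥ n₁ ≥ n₂ ≥ 1} t₂^{n₁} t₁^{n₂}/(n₁^{k₂} n₂^{k₁}), B_1 = ∑_{N ≥ n ≥ 1} t₂^n/n^{k₂}, B_2 = 1; this is an identity in ℚ[t₁,t₂]. -/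
open MvPolynomial

/-- Depth-2 finite antipode identity in `ℚ[t₁,t₂]`:
`∑_{j=0}^{2} (-1)^j A_j B_j = 0` where `A_j` are the truncated strict sums in `(t₁,t₂)`
and `B_j` the truncated non-strict (star) sums in the reversed variables.
Here `t₁ = X 0`, `t₂ = X 1`. -/
theorem antipode_depth_two (N k₁ k₂ : ℕ) (hN : 0 < N) (h1 : 0 < k₁) (h2 : 0 < k₂) :
    (1 : MvPolynomial (Fin 2) ℚ) *
        (∑ n₁ ∈ Finset.Icc 1 N, ∑ n₂ ∈ Finset.Icc 1 n₁,
          X 1 ^ n₁ * X 0 ^ n₂ * C (1 / ((n₁ : ℚ) ^ k₂ * (n₂ : ℚ) ^ k₁)))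
      - (∑ n ∈ Finset.Icc 1 N, X 0 ^ n * C (1 / (n : ℚ) ^ k₁)) *
          (∑ n ∈ Finset.Icc 1 N, X 1 ^ n * C (1 / (n : ℚ) ^ k₂))
      + (∑ n₁ ∈ Finset.Icc 1 N, ∑ n₂ ∈ Finset.Ico 1 n₁,
          X 0 ^ n₁ * X 1 ^ n₂ * C (1 / ((n₁ : ℚ) ^ k₁ * (n₂ : ℚ) ^ k₂))) * 1
      = 0 := by
  have split : ∀ f : ℕ → ℕ → MvPolynomial (Fin 2) ℚ,
      (∑ m ∈ Finset.Icc 1 N, ∑ n ∈ Finset.Icc 1 N, f m n)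
        = (∑ n ∈ Finset.Icc 1 N, ∑ m ∈ Finset.Icc 1 n, f m n)
          + ∑ m ∈ Finset.Icc 1 N, ∑ n ∈ Finset.Ico 1 m, f m n := by
    intro f
    have h1 : ∑ m ∈ Finset.Icc 1 N, ∑ n ∈ Finset.Icc 1 N, f m n
        = ∑ m ∈ Finset.Icc 1 N,
            (∑ n ∈ Finset.Ico 1 m, f m n + ∑ n ∈ Finset.Ico m (N + 1), f m n) := by
      refine Finset.sum_congr rfl fun m hm => ?_
      rw [Finset.mem_Icc] at hm
      rw [Finset.sum_Ico_consecutive _ hm.1 (by omega), Finset.Ico_add_one_right_eq_Icc]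
    rw [h1, Finset.sum_add_distrib, add_comm]
    congr 1
    rw [← Finset.Ico_add_one_right_eq_Icc 1 N, Finset.sum_Ico_Ico_comm]
    refine Finset.sum_congr rfl fun n hn => ?_
    rw [Finset.Ico_add_one_right_eq_Icc]
  rw [one_mul, mul_one, Finset.sum_mul_sum, split fun m n =>
    ((X 0 : MvPolynomial (Fin 2) ℚ) ^ m * C (1 / (m : ℚ) ^ k₁)) * (X 1 ^ n * C (1 / (n : ℚ) ^ k₂))]
  have e1 : ∀ m n : ℕ, ((X 0 : MvPolynomial (Fin 2) ℚ) ^ m * C (1 / (m : ℚ) ^ k₁)) * (X 1 ^ n * C (1 / (n : ℚ) ^ k₂))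
      = (X 1 : MvPolynomial (Fin 2) ℚ) ^ n * X 0 ^ m * C (1 / ((n : ℚ) ^ k₂ * (m : ℚ) ^ k₁)) := by
    intro m n
    rw [one_div, one_div, one_div, mul_inv, map_mul]
    ring
  have e2 : ∀ m n : ℕ, ((X 0 : MvPolynomial (Fin 2) ℚ) ^ m * C (1 / (m : ℚ) ^ k₁)) * (X 1 ^ n * C (1 / (n : ℚ) ^ k₂))
      = (X 0 : MvPolynomial (Fin 2) ℚ) ^ m * X 1 ^ n * C (1 / ((m : ℚ) ^ k₁ * (n : ℚ) ^ k₂)) := by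
    intro m n
    rw [one_div, one_div, one_div, mul_inv, map_mul]
    ring
  have hB : (∑ n ∈ Finset.Icc 1 N, ∑ m ∈ Finset.Icc 1 n,
      ((X 0 : MvPolynomial (Fin 2) ℚ) ^ m * C (1 / (m : ℚ) ^ k₁)) * (X 1 ^ n * C (1 / (n : ℚ) ^ k₂)))
      = ∑ n₁ ∈ Finset.Icc 1 N, ∑ n₂ ∈ Finset.Icc 1 n₁,
          (X 1 : MvPolynomial (Fin 2) ℚ) ^ n₁ * X 0 ^ n₂ * C (1 / ((n₁ : ℚ) ^ k₂ * (n₂ : ℚ) ^ k₁)) :=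
    Finset.sum_congr rfl fun n _ => Finset.sum_congr rfl fun m _ => e1 m n
  have hA : (∑ m ∈ Finset.Icc 1 N, ∑ n ∈ Finset.Ico 1 m,
      ((X 0 : MvPolynomial (Fin 2) ℚ) ^ m * C (1 / (m : ℚ) ^ k₁)) * (X 1 ^ n * C (1 / (n : ℚ) ^ k₂)))
      = ∑ n₁ ∈ Finset.Icc 1 N, ∑ n₂ ∈ Finset.Ico 1 n₁,
          (X 0 : MvPolynomial (Fin 2) ℚ) ^ n₁ * X 1 ^ n₂ * C (1 / ((n₁ : ℚ) ^ k₁ * (n₂ : ℚ) ^ k₂)) :=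
    Finset.sum_congr rfl fun m _ => Finset.sum_congr rfl fun n _ => e2 m n
  rw [hB, hA]
  ring
end

section
/- Let m be a positive integer, 𝕜 = (k₁,…,k_m) an index of positive integers, and N a positive integer. Then in the polynomial ring ℚ[t₁,…,t_m]: (-1)^{m-1} ∑_{N ≥ n₁ > ⋯ > n_m ≥ 1} t₁^{n₁}⋯t_m^{n_m}/(n₁^{k₁}⋯n_m^{k_m}) = ∑_{N ≥ n₁ ≥ ⋯ ≥ n_m ≥ 1} t_m^{n₁}⋯t₁^{n_m}/(n₁^{k_m}⋯n_m^{k₁}) + ∑_{j=1}^{m-1} (-1)^j (∑_{N ≥ n₁ > ⋯ > n_j ≥ 1} t₁^{n₁}⋯t_j^{n_j}/(n₁^{k₁}⋯n_j^{k_j})) · (∑_{N ≥ n₁ ≥ ⋯ ≥ n_{m-j} ≥ 1} t_m^{n₁}⋯t_{j+1}^{n_{m-j}}/(n₁^{k_m}⋯n_{m-j}^{k_{j+1}})). -/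
open MvPolynomial

/-- Truncated multiple polylogarithm sum over tuples `N ≥ n₁ > ⋯ > n_r ≥ 1`
(strict if `strict = true`, weakly decreasing otherwise), with exponents `κ` and
variables `v` (both read off via `Fin r → ℕ` positions), valued in `ℚ[t₀,t₁,…]`. -/
noncomputable def truncPolylogSum (N r : ℕ) (strict : Bool) (κ : ℕ → ℕ)
    (v : ℕ → MvPolynomial ℕ ℚ) : MvPolynomial ℕ ℚ :=
  ∑ n ∈ Finset.filter
      (fun n : Fin r → ℕ =>
        ∀ a b : Fin r, a < b → (if strict then n b < n a else n b ≤ n a))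
      (Fintype.piFinset fun _ => Finset.Icc 1 N),
    (∏ i : Fin r, v i.val ^ n i) * MvPolynomial.C (∏ i : Fin r, 1 / (n i : ℚ) ^ κ i.val)

/-!
Expanding the `j`-th product on the right, a strict tuple of depth `j` concatenated with the
reverse of a star tuple of depth `m - j` is a single tuple `q ∈ [1, N]^m` that strictly decreases
on its first `j` entries and weakly increases on the rest (a valley at `j`), and the product of
the two terms is `t₁^{q₁}⋯t_m^{q_m}/(q₁^{k₁}⋯q_m^{k_m})`. For fixed `q` the valleys
`j ∈ [0, m]` form either the empty set or a pair `{b, b + 1}`, so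
`∑_{j=0}^{m} (-1)^j (j-th product) = 0`; its terms `j = 0` and `j = m` are the star sum and
`(-1)^m` times the strict sum.
-/

open Finset

theorem Finset.sum_neg_one_pow_eq_zero_of_forall_le_add_one {R : Type*} [Ring R] {S : Finset ℕ}
    (hdiam : ∀ i ∈ S, ∀ j ∈ S, j ≤ i + 1) (hne : ∀ i ∈ S, ∃ j ∈ S, j ≠ i) :
    ∑ j ∈ S, (-1 : R) ^ j = 0 := by
  rcases S.eq_empty_or_nonempty with rfl | hS
  · simp
  obtain ⟨b, hb, hmin⟩ : ∃ b ∈ S, ∀ j ∈ S, b ≤ j :=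
    ⟨S.min' hS, S.min'_mem hS, fun j hj => S.min'_le j hj⟩
  have hS_eq : S = {b, b + 1} := by
    obtain ⟨c, hc, hcb⟩ := hne b hb
    obtain rfl : c = b + 1 := by
      have := hmin c hc
      have := hdiam b hb c hc
      omega
    ext j
    simp only [mem_insert, mem_singleton]
    refine ⟨fun hj => ?_, by rintro (rfl | rfl) <;> assumption⟩
    have := hmin j hj
    have := hdiam b hb j hj
    omega
  rw [hS_eq, sum_pair (by omega), pow_succ, mul_neg_one, add_neg_cancel]

section Valley

variable {α : Type*} {m : ℕ}

def IsValleyAt [Preorder α] (q : Fin m → α) (j : ℕ) : Prop :=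
  StrictAntiOn q {i | (i : ℕ) < j} ∧ MonotoneOn q {i | j ≤ (i : ℕ)}

theorem IsValleyAt.le_add_one [Preorder α] {q : Fin m → α} {i j : ℕ} (hi : IsValleyAt q i)
    (hj : IsValleyAt q j) (hjm : j ≤ m) : j ≤ i + 1 := by
  by_contra! h
  have hdesc : q ⟨i + 1, by omega⟩ < q ⟨i, by omega⟩ :=
    hj.1 (show i < j by omega) (show i + 1 < j by omega) (show i < i + 1 by omega)
  have hasc : q ⟨i, by omega⟩ ≤ q ⟨i + 1, by omega⟩ :=
    hi.2 (show i ≤ i from le_rfl) (show i ≤ i + 1 by omega) (show i ≤ i + 1 by omega)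
  exact (hdesc.trans_le hasc).false

theorem IsValleyAt.succ [Preorder α] {q : Fin m → α} {j : ℕ} (hj : IsValleyAt q j)
    (hjm : j < m) (hdesc : 0 < j → q ⟨j, hjm⟩ < q ⟨j - 1, by omega⟩) :
    IsValleyAt q (j + 1) := by
  refine ⟨fun a (ha : (a : ℕ) < j + 1) b (hb : (b : ℕ) < j + 1) hab => ?_,
    hj.2.mono fun i (hi : j + 1 ≤ (i : ℕ)) => (by omega : j ≤ (i : ℕ))⟩
  have hab' : (a : ℕ) < b := hab
  have hj1 : j - 1 < m := by omega
  obtain hbj | hbj := Nat.lt_or_ge b j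
  · exact hj.1 (show (a : ℕ) < j by omega) hbj hab
  obtain rfl : b = ⟨j, hjm⟩ := Fin.ext (by simp only; omega)
  refine (hdesc (by omega)).trans_le ?_
  obtain haj | haj := Nat.lt_or_ge a (j - 1)
  · exact (hj.1 (show (a : ℕ) < j by omega) (show j - 1 < j by omega)
      (show a < ⟨j - 1, hj1⟩ from haj)).le
  · obtain rfl : a = ⟨j - 1, hj1⟩ := Fin.ext (by simp only; omega)
    rfl

theorem IsValleyAt.pred [Preorder α] {q : Fin m → α} {j : ℕ} (hj : IsValleyAt q j)
    (hj0 : 0 < j) (hjm : j ≤ m) (hasc : ∀ h : j < m, q ⟨j - 1, by omega⟩ ≤ q ⟨j, h⟩) :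
    IsValleyAt q (j - 1) := by
  refine ⟨hj.1.mono fun i (hi : (i : ℕ) < j - 1) => (by omega : (i : ℕ) < j),
    fun a (ha : j - 1 ≤ (a : ℕ)) b (hb : j - 1 ≤ (b : ℕ)) hab => ?_⟩
  have hab' : (a : ℕ) ≤ b := hab
  have hj1 : j - 1 < m := by omega
  obtain haj | haj := Nat.lt_or_ge a j
  · obtain rfl : a = ⟨j - 1, hj1⟩ := Fin.ext (by simp only; omega)
    obtain hbj | hbj := Nat.lt_or_ge b j
    · obtain rfl : b = ⟨j - 1, hj1⟩ := Fin.ext (by simp only; omega)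
      rfl
    · have hjm' : j < m := by omega
      exact (hasc hjm').trans
        (hj.2 (show j ≤ j from le_rfl) hbj (show ⟨j, hjm'⟩ ≤ b from hbj))
  · exact hj.2 haj (show j ≤ (b : ℕ) by omega) hab

theorem IsValleyAt.exists_ne [LinearOrder α] {q : Fin m → α} {j : ℕ} (hm : 0 < m)
    (hj : IsValleyAt q j) (hjm : j ≤ m) : ∃ i ≤ m, IsValleyAt q i ∧ i ≠ j := by
  by_cases hdesc : ∃ h : j < m, 0 < j → q ⟨j, h⟩ < q ⟨j - 1, by omega⟩
  · obtain ⟨hjm', hdesc⟩ := hdesc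
    exact ⟨j + 1, hjm', hj.succ hjm' hdesc, by omega⟩
  · simp only [not_exists, Classical.not_imp, not_lt] at hdesc
    have hj0 : 0 < j := (lt_or_ge j m).elim (fun h => (hdesc h).1) (by omega)
    exact ⟨j - 1, by omega, hj.pred hj0 hjm fun h => (hdesc h).2, by omega⟩

theorem sum_filter_isValleyAt_neg_one_pow {R : Type*} [Ring R] [LinearOrder α] (hm : 0 < m)
    (q : Fin m → α) [DecidablePred (IsValleyAt q)] :
    ∑ j ∈ (range (m + 1)).filter (IsValleyAt q), (-1 : R) ^ j = 0 := by
  refine sum_neg_one_pow_eq_zero_of_forall_le_add_one (fun i hi j hj => ?_) fun j hj => ?_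
  · simp only [mem_filter, mem_range] at hi hj
    exact hi.2.le_add_one hj.2 (by omega)
  · simp only [mem_filter, mem_range] at hj ⊢
    obtain ⟨i, him, hi, hij⟩ := hj.2.exists_ne hm (by omega)
    exact ⟨i, ⟨by omega, hi⟩, hij⟩

theorem isValleyAt_append_iff [Preorder α] {j l : ℕ} (n : Fin j → α) (p : Fin l → α) :
    IsValleyAt (Fin.append n p) j ↔ StrictAnti n ∧ Monotone p := by
  constructor
  · rintro ⟨hn, hp⟩
    refine ⟨fun a b hab => ?_, fun a b hab => ?_⟩
    · simpa using hn (a := Fin.castAdd l a) (by simp) (b := Fin.castAdd l b) (by simp) hab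
    · simpa using hp (a := Fin.natAdd j a) (by simp) (b := Fin.natAdd j b) (by simp)
        (by simpa using hab)
  · rintro ⟨hn, hp⟩
    constructor
    · intro a ha b hb hab
      cases b using Fin.addCases with
      | right b => exact absurd hb (by simp)
      | left b => cases a using Fin.addCases with
        | right a => exact absurd hab (by rw [Fin.lt_def, Fin.val_natAdd, Fin.val_castAdd]; omega)
        | left a => simpa using hn (a := a) (b := b) hab
    · intro a ha b hb hab
      cases a using Fin.addCases with
      | left a => exact absurd ha (by simp)
      | right a => cases b using Fin.addCases with
        | left b => exact absurd hab (by rw [Fin.le_def, Fin.val_natAdd, Fin.val_castAdd]; omega)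
        | right b => simpa using hp (a := a) (b := b) (by simpa using hab)

end Valley

theorem sum_antitone_eq_sum_monotone_comp_rev {M α : Type*} [AddCommMonoid M] [Preorder α]
    (s : Finset α) (l : ℕ) [DecidablePred (Antitone : (Fin l → α) → Prop)]
    [DecidablePred (Monotone : (Fin l → α) → Prop)] (f : (Fin l → α) → M) :
    ∑ n ∈ (Fintype.piFinset fun _ : Fin l => s).filter Antitone, f n =
      ∑ p ∈ (Fintype.piFinset fun _ : Fin l => s).filter Monotone, f (p ∘ Fin.rev) := by
  have hrev : Function.Involutive fun n : Fin l → α => n ∘ Fin.rev := fun n => by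
    ext i
    simp
  refine sum_equiv (hrev.toPerm _) (fun n => ?_) fun n _ => by simp [Function.comp_def]
  simp only [mem_filter, Fintype.mem_piFinset, Function.Involutive.coe_toPerm, Function.comp_apply]
  refine and_congr ⟨fun h i => h _, fun h i => by simpa using h (Fin.rev i)⟩
    ⟨fun h => Antitone.comp h Fin.rev_anti, fun h => ?_⟩
  simpa [Function.comp_def] using Monotone.comp_antitone h Fin.rev_anti

theorem sum_strictAnti_mul_sum_monotone {R α : Type*} [CommSemiring R] [Preorder α]
    (s : Finset α) (j l : ℕ) [DecidablePred (StrictAnti : (Fin j → α) → Prop)]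
    [DecidablePred (Monotone : (Fin l → α) → Prop)]
    [DecidablePred fun q : Fin (j + l) → α => IsValleyAt q j] (w : ℕ → α → R) :
    (∑ n ∈ (Fintype.piFinset fun _ : Fin j => s).filter StrictAnti, ∏ i : Fin j, w i (n i)) *
        (∑ p ∈ (Fintype.piFinset fun _ : Fin l => s).filter Monotone,
          ∏ i : Fin l, w (j + i) (p i)) =
      ∑ q ∈ (Fintype.piFinset fun _ => s).filter (IsValleyAt · j),
        ∏ i : Fin (j + l), w i (q i) := by
  rw [sum_mul_sum, ← sum_product']
  refine sum_equiv (Fin.appendEquiv j l) (fun ⟨n, p⟩ => ?_) fun np _ => ?_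
  · rw [show Fin.appendEquiv j l (n, p) = Fin.append n p from rfl]
    simp only [mem_product, mem_filter, Fintype.mem_piFinset, isValleyAt_append_iff,
      Fin.forall_fin_add, Fin.append_left, Fin.append_right]
    tauto
  · simp [Fin.prod_univ_add]

noncomputable def polylogTerm (κ : ℕ → ℕ) (v : ℕ → MvPolynomial ℕ ℚ) (i e : ℕ) :
    MvPolynomial ℕ ℚ :=
  v i ^ e * C (1 / (e : ℚ) ^ κ i)

theorem truncPolylogSum_eq_sum_prod (N r : ℕ) (strict : Bool) (κ : ℕ → ℕ)
    (v : ℕ → MvPolynomial ℕ ℚ) :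
    truncPolylogSum N r strict κ v =
      ∑ n ∈ (Fintype.piFinset fun _ : Fin r => Icc 1 N).filter
          (fun n => ∀ a b : Fin r, a < b → (if strict then n b < n a else n b ≤ n a)),
        ∏ i : Fin r, polylogTerm κ v i (n i) := by
  refine sum_congr rfl fun n _ => ?_
  simp only [polylogTerm, prod_mul_distrib, map_prod]

@[simp]
theorem truncPolylogSum_zero (N : ℕ) (strict : Bool) (κ : ℕ → ℕ)
    (v : ℕ → MvPolynomial ℕ ℚ) :
    truncPolylogSum N 0 strict κ v = 1 := by
  simp [truncPolylogSum]

theorem truncPolylogSum_true (N r : ℕ) (κ : ℕ → ℕ) (v : ℕ → MvPolynomial ℕ ℚ) :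
    truncPolylogSum N r true κ v =
      ∑ n ∈ (Fintype.piFinset fun _ : Fin r => Icc 1 N).filter StrictAnti,
        ∏ i : Fin r, polylogTerm κ v i (n i) := by
  rw [truncPolylogSum_eq_sum_prod]
  exact sum_congr (filter_congr fun n _ => by simp [StrictAnti]) fun _ _ => rfl

theorem truncPolylogSum_false (N r : ℕ) (κ : ℕ → ℕ) (v : ℕ → MvPolynomial ℕ ℚ) :
    truncPolylogSum N r false κ v =
      ∑ n ∈ (Fintype.piFinset fun _ : Fin r => Icc 1 N).filter Antitone,
        ∏ i : Fin r, polylogTerm κ v i (n i) := by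
  rw [truncPolylogSum_eq_sum_prod]
  exact sum_congr (filter_congr fun n _ => by simp [antitone_iff_forall_lt]) fun _ _ => rfl

open scoped Classical in
theorem truncPolylogSum_mul_truncPolylogSum_rev (N j m : ℕ) (hjm : j ≤ m) (k : ℕ → ℕ) :
    truncPolylogSum N j true k (fun i => X i) *
        truncPolylogSum N (m - j) false (fun i => k (m - 1 - i)) (fun i => X (m - 1 - i)) =
      ∑ q ∈ (Fintype.piFinset fun _ : Fin m => Icc 1 N).filter (IsValleyAt · j),
        ∏ i : Fin m, polylogTerm k (fun i => X i) i (q i) := by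
  obtain ⟨l, rfl⟩ := Nat.exists_eq_add_of_le hjm
  rw [Nat.add_sub_cancel_left, truncPolylogSum_true, truncPolylogSum_false,
    sum_antitone_eq_sum_monotone_comp_rev, ← sum_strictAnti_mul_sum_monotone]
  congr 1
  refine sum_congr rfl fun p _ => Fintype.prod_equiv Fin.revPerm _ _ fun i => ?_
  have hi := i.isLt
  simp only [polylogTerm, Function.comp_apply, Fin.revPerm_apply, Fin.val_rev]
  rw [show j + l - 1 - (i : ℕ) = j + (l - (i + 1)) by omega]

open scoped Classical in
theorem sum_range_neg_one_pow_mul_truncPolylogSum_mul (m N : ℕ) (hm : 0 < m) (k : ℕ → ℕ) :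
    ∑ j ∈ range (m + 1), (-1 : MvPolynomial ℕ ℚ) ^ j *
        truncPolylogSum N j true k (fun i => X i) *
        truncPolylogSum N (m - j) false (fun i => k (m - 1 - i)) (fun i => X (m - 1 - i)) = 0 := by
  set P := Fintype.piFinset fun _ : Fin m => Icc 1 N
  set term := fun q : Fin m → ℕ => ∏ i : Fin m, polylogTerm k (fun i => X i) i (q i)
  calc _ = ∑ j ∈ range (m + 1), ∑ q ∈ P,
        if IsValleyAt q j then (-1 : MvPolynomial ℕ ℚ) ^ j * term q else 0 := by
        refine sum_congr rfl fun j hj => ?_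
        have hjm : j ≤ m := Nat.lt_succ_iff.mp (mem_range.mp hj)
        rw [mul_assoc, truncPolylogSum_mul_truncPolylogSum_rev N j m hjm, mul_sum, sum_filter]
    _ = ∑ q ∈ P,
          (∑ j ∈ (range (m + 1)).filter (IsValleyAt q), (-1 : MvPolynomial ℕ ℚ) ^ j) *
            term q := by
        rw [sum_comm]
        simp only [sum_mul, sum_filter, ite_mul, zero_mul]
    _ = 0 := sum_eq_zero fun q _ => by rw [sum_filter_isValleyAt_neg_one_pow hm, zero_mul]

theorem trunc_antipode_general (m N : ℕ) (hm : 0 < m) (k : ℕ → ℕ) :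
    (-1 : MvPolynomial ℕ ℚ) ^ (m - 1) * truncPolylogSum N m true k (fun i => X i)
      = truncPolylogSum N m false (fun i => k (m - 1 - i)) (fun i => X (m - 1 - i))
        + ∑ j ∈ Finset.Ico 1 m, (-1 : MvPolynomial ℕ ℚ) ^ j *
            truncPolylogSum N j true k (fun i => X i) *
            truncPolylogSum N (m - j) false (fun i => k (m - 1 - i))
              (fun i => X (m - 1 - i)) := by
  have h := sum_range_neg_one_pow_mul_truncPolylogSum_mul m N hm k
  rw [sum_range_succ, range_eq_Ico, sum_eq_sum_Ico_succ_bot hm] at h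
  simp only [zero_add, pow_zero, one_mul, Nat.sub_zero, Nat.sub_self, truncPolylogSum_zero,
    mul_one] at h
  have hsign : (-1 : MvPolynomial ℕ ℚ) ^ m = -(-1) ^ (m - 1) := by
    obtain ⟨n, rfl⟩ := Nat.exists_eq_add_of_lt hm
    simp [pow_succ]
  rw [hsign] at h
  linear_combination -h

/-- The truncated antipode identity for multiple polylogarithms:
`(-1)^{m-1} ∑_{N ≥ n₁ > ⋯ > n_m ≥ 1} t₁^{n₁}⋯t_m^{n_m}/(n₁^{k₁}⋯n_m^{k_m})
 = ∑_{N ≥ n₁ ≥ ⋯ ≥ n_m ≥ 1} t_m^{n₁}⋯t₁^{n_m}/(n₁^{k_m}⋯n_m^{k₁})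
   + ∑_{j=1}^{m-1} (-1)^j (strict sum of depth j) ⬝ (star sum of depth m-j, reversed)`
in `ℚ[t₁,…,t_m]` (variable `tᵢ` is `X (i-1)`, index `kᵢ` is `k (i-1)`). -/
theorem trunc_antipode (m N : ℕ) (hm : 0 < m) (hN : 0 < N) (k : ℕ → ℕ)
    (hk : ∀ i < m, 0 < k i) :
    (-1 : MvPolynomial ℕ ℚ) ^ (m - 1) * truncPolylogSum N m true k (fun i => X i)
      = truncPolylogSum N m false (fun i => k (m - 1 - i)) (fun i => X (m - 1 - i))
        + ∑ j ∈ Finset.Ico 1 m, (-1 : MvPolynomial ℕ ℚ) ^ j *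
            truncPolylogSum N j true k (fun i => X i) *
            truncPolylogSum N (m - j) false (fun i => k (m - 1 - i))
              (fun i => X (m - 1 - i)) :=
  trunc_antipode_general m N hm k
end

section
/- Let 𝕜 = (k₁,…,k_m) be an index of positive integers with k₁ ≥ 2 and k_m ≥ 2. Then ∑_{j=0}^{m} (-1)^j ζ(k₁,…,k_j) ζ^⋆(k_m,…,k_{j+1}) = 0, where ζ(∅) = ζ^⋆(∅) = 1. -/
/-!
For each `j`, the product `ζ(k₁,…,k_j) ζ^⋆(k_m,…,k_{j+1})` is the sum of `∏ nᵢ^{-kᵢ}` over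
the positive tuples `(n₁,…,n_m)` that strictly decrease on the first `j` places and weakly
increase on the remaining ones (the star tuple is read backwards). For a fixed tuple the
admissible `j` are either none or exactly two consecutive ones: `j` can be raised when
`n_{j+1} < n_j` (or `j = 0`) and lowered otherwise. Hence the alternating sum cancels tuple by
tuple. Absolute convergence comes from `∑_{x ≥ c} x^{-2} ≤ 2 / c`, which gives
`ζ^⋆(l₁, l₂, …) ≤ 2 ζ^⋆(l₂ + 1, …)`.
-/

/-- The multiple zeta value `ζ(k₁,…,k_r)` as a sum over strictly decreasing tuples
`n₁ > ⋯ > n_r ≥ 1` (indices read off as `k (i-1)` for the `i`-th entry). -/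
noncomputable def mzv (r : ℕ) (k : ℕ → ℕ) : ℝ :=
  ∑' n : {f : Fin r → ℕ // (∀ a b : Fin r, a < b → f b < f a) ∧ ∀ i, 1 ≤ f i},
    ∏ i : Fin r, (1 : ℝ) / (n.val i : ℝ) ^ k i.val

/-- The multiple zeta-star value `ζ^⋆(k₁,…,k_r)` as a sum over weakly decreasing tuples
`n₁ ≥ ⋯ ≥ n_r ≥ 1`. -/
noncomputable def mzvStar (r : ℕ) (k : ℕ → ℕ) : ℝ :=
  ∑' n : {f : Fin r → ℕ // (∀ a b : Fin r, a < b → f b ≤ f a) ∧ ∀ i, 1 ≤ f i},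
    ∏ i : Fin r, (1 : ℝ) / (n.val i : ℝ) ^ k i.val

open Finset Set

noncomputable def zetaTerm {r : ℕ} (l : ℕ → ℕ) (n : Fin r → ℕ) : ℝ :=
  ∏ i, 1 / (n i : ℝ) ^ l i

lemma zetaTerm_nonneg {r : ℕ} (l : ℕ → ℕ) (n : Fin r → ℕ) : 0 ≤ zetaTerm l n :=
  prod_nonneg fun _ _ => by positivity

-- `mzv` and `mzvStar` are, definitionally, the sums of `zetaTerm` over these two sets.
def mzvIndexSet (r : ℕ) : Set (Fin r → ℕ) :=
  {n | (∀ a b, a < b → n b < n a) ∧ ∀ i, 1 ≤ n i}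

def mzvStarIndexSet (r : ℕ) : Set (Fin r → ℕ) :=
  {n | (∀ a b, a < b → n b ≤ n a) ∧ ∀ i, 1 ≤ n i}

lemma mzvIndexSet_subset_mzvStarIndexSet (r : ℕ) : mzvIndexSet r ⊆ mzvStarIndexSet r :=
  fun _ hn => ⟨fun a b hab => (hn.1 a b hab).le, hn.2⟩

lemma zetaTerm_cons {r : ℕ} (l : ℕ → ℕ) (x : ℕ) (g : Fin r → ℕ) :
    zetaTerm l (Fin.cons x g : Fin (r + 1) → ℕ) =
      1 / (x : ℝ) ^ l 0 * zetaTerm (fun i => l (i + 1)) g := by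
  simp [zetaTerm, Fin.prod_univ_succ, mul_comm]

lemma zetaTerm_update_zero {r : ℕ} (l : ℕ → ℕ) (g : Fin (r + 1) → ℕ) :
    zetaTerm (Function.update l 0 (l 0 + 1)) g = zetaTerm l g / g 0 := by
  simp only [zetaTerm, Fin.prod_univ_succ, Fin.val_zero, Function.update_self, Fin.val_succ,
    ne_eq, Nat.succ_ne_zero, not_false_eq_true, Function.update_of_ne, pow_succ]
  ring

lemma cons_mem_mzvStarIndexSet_iff {r : ℕ} (x : ℕ) (g : Fin (r + 1) → ℕ) :
    (Fin.cons x g : Fin (r + 2) → ℕ) ∈ mzvStarIndexSet (r + 2) ↔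
      g ∈ mzvStarIndexSet (r + 1) ∧ g 0 ≤ x := by
  have hcons := Fin.liftFun_cons (· ≥ ·) (f := g) (a := x)
  constructor
  · rintro ⟨hdec, hpos⟩
    obtain ⟨hle, hgdec⟩ := hcons.1 hdec
    exact ⟨⟨hgdec, fun i => by simpa using hpos i.succ⟩, hle 0⟩
  · rintro ⟨⟨hgdec, hgpos⟩, h0⟩
    have hanti : Antitone g := antitone_iff_forall_lt.2 hgdec
    refine ⟨hcons.2 ⟨fun i => (hanti (Fin.zero_le i)).trans h0, hgdec⟩, Fin.cases ?_ ?_⟩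
    · exact (hgpos 0).trans h0
    · simpa using hgpos

lemma tsum_indicator_Ici_one_div_pow_le {c l : ℕ} (hc : 1 ≤ c) (hl : 2 ≤ l) :
    ∑' x, (Ici c).indicator (fun x : ℕ => 1 / (x : ℝ) ^ l) x ≤ 2 / c := by
  refine Real.tsum_le_of_sum_range_le (fun _ => indicator_nonneg (fun _ _ => by positivity) _)
    fun n => ?_
  calc ∑ i ∈ range n, (Ici c).indicator (fun x : ℕ => 1 / (x : ℝ) ^ l) i
      = ∑ i ∈ range n with c ≤ i, 1 / (i : ℝ) ^ l := by
        rw [sum_indicator_eq_sum_filter]; rfl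
    _ ≤ ∑ i ∈ range n with c ≤ i, ((i : ℝ) ^ 2)⁻¹ := by
        refine sum_le_sum fun i hi => ?_
        have hi : (1 : ℝ) ≤ i := by exact_mod_cast hc.trans (mem_filter.1 hi).2
        rw [one_div]
        exact inv_anti₀ (by positivity) (pow_le_pow_right₀ hi hl)
    _ ≤ ∑ i ∈ Ioo (c - 1) n, ((i : ℝ) ^ 2)⁻¹ :=
        sum_le_sum_of_subset_of_nonneg
          (fun i hi => by simp only [mem_filter, Finset.mem_range, Finset.mem_Ioo] at hi ⊢; omega)
          (fun _ _ _ => by positivity)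
    _ ≤ 2 / ((c - 1 : ℕ) + 1) := sum_Ioo_inv_sq_le _ _
    _ = 2 / c := by rw [Nat.cast_sub hc]; ring

lemma indicator_mzvStarIndexSet_cons {r : ℕ} (l : ℕ → ℕ) (g : Fin (r + 1) → ℕ) (x : ℕ) :
    (mzvStarIndexSet (r + 2)).indicator (zetaTerm l) (Fin.cons x g) =
      (mzvStarIndexSet (r + 1)).indicator (zetaTerm fun i => l (i + 1)) g *
        (Ici (g 0)).indicator (fun x : ℕ => 1 / (x : ℝ) ^ l 0) x := by
  by_cases hg : g ∈ mzvStarIndexSet (r + 1) <;> by_cases hx : g 0 ≤ x <;>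
    simp [cons_mem_mzvStarIndexSet_iff, hg, hx, zetaTerm_cons, mul_comm]

lemma summable_indicator_mzvStarIndexSet_succ (r : ℕ) {l : ℕ → ℕ} (h0 : 2 ≤ l 0)
    (hl : ∀ i ≤ r, 0 < l i) : Summable ((mzvStarIndexSet (r + 1)).indicator (zetaTerm l)) := by
  induction r generalizing l with
  | zero =>
    refine Summable.indicator ?_ _
    rw [← (Equiv.funUnique (Fin 1) ℕ).symm.summable_iff]
    exact (Real.summable_one_div_nat_pow.2 h0).congr fun x => by simp [zetaTerm]
  | succ r ih =>
    set l₁ : ℕ → ℕ := fun i => l (i + 1)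
    have hbump := ih (l := Function.update l₁ 0 (l₁ 0 + 1)) (by simp [l₁]; have := hl 1; omega)
      fun i hi => by
        rcases i with _ | i
        · simp
        · simpa [l₁] using hl (i + 2) (by omega)
    have htail : Summable fun x : ℕ => 1 / (x : ℝ) ^ l 0 :=
      Real.summable_one_div_nat_pow.2 h0
    rw [← ((Equiv.prodComm _ _).trans (Fin.consEquiv fun _ => ℕ)).summable_iff]
    have hsplit : (mzvStarIndexSet (r + 2)).indicator (zetaTerm l) ∘
        ((Equiv.prodComm _ _).trans (Fin.consEquiv fun _ => ℕ)) = fun p =>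
          (mzvStarIndexSet (r + 1)).indicator (zetaTerm l₁) p.1 *
            (Ici (p.1 0)).indicator (fun x : ℕ => 1 / (x : ℝ) ^ l 0) p.2 :=
      funext fun p => indicator_mzvStarIndexSet_cons l p.1 p.2
    rw [hsplit]
    refine (summable_prod_of_nonneg fun p => ?_).2 ⟨fun g => ?_, ?_⟩
    · exact mul_nonneg (indicator_nonneg (fun _ _ => zetaTerm_nonneg _ _) _)
        (indicator_nonneg (fun _ _ => by positivity) _)
    · exact Summable.mul_left ((mzvStarIndexSet (r + 1)).indicator (zetaTerm l₁) g)
        (htail.indicator (Ici (g 0)))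
    refine (hbump.mul_left 2).of_nonneg_of_le (fun g => ?_) fun g => ?_
    · exact tsum_nonneg fun x => mul_nonneg (indicator_nonneg (fun _ _ => zetaTerm_nonneg _ _) _)
        (indicator_nonneg (fun _ _ => by positivity) _)
    dsimp only
    rw [tsum_mul_left]
    by_cases hg : g ∈ mzvStarIndexSet (r + 1)
    · rw [indicator_of_mem hg, indicator_of_mem hg, zetaTerm_update_zero]
      calc zetaTerm l₁ g * ∑' x, (Ici (g 0)).indicator (fun x : ℕ => 1 / (x : ℝ) ^ l 0) x
          ≤ zetaTerm l₁ g * (2 / g 0) :=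
            mul_le_mul_of_nonneg_left (tsum_indicator_Ici_one_div_pow_le (hg.2 0) h0)
              (zetaTerm_nonneg _ _)
        _ = 2 * (zetaTerm l₁ g / g 0) := by ring
    · simp [indicator_of_notMem hg]

lemma summable_indicator_mzvStarIndexSet {r : ℕ} {l : ℕ → ℕ} (h0 : 2 ≤ l 0)
    (hl : ∀ i < r, 0 < l i) : Summable ((mzvStarIndexSet r).indicator (zetaTerm l)) := by
  cases r with
  | zero => exact Summable.of_finite
  | succ r => exact summable_indicator_mzvStarIndexSet_succ r h0 fun i hi => hl i (by omega)

lemma hasSum_mzvStar {r : ℕ} {l : ℕ → ℕ} (h0 : 2 ≤ l 0) (hl : ∀ i < r, 0 < l i) :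
    HasSum (fun n : mzvStarIndexSet r => zetaTerm l n.1) (mzvStar r l) :=
  (summable_subtype_iff_indicator (s := mzvStarIndexSet r) (f := zetaTerm l)).2
    (summable_indicator_mzvStarIndexSet h0 hl) |>.hasSum

lemma hasSum_mzv {r : ℕ} {l : ℕ → ℕ} (h0 : 2 ≤ l 0) (hl : ∀ i < r, 0 < l i) :
    HasSum (fun n : mzvIndexSet r => zetaTerm l n.1) (mzv r l) := by
  refine ((summable_subtype_iff_indicator (s := mzvIndexSet r) (f := zetaTerm l)).2 ?_).hasSum
  exact (summable_indicator_mzvStarIndexSet h0 hl).of_nonneg_of_le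
    (fun _ => indicator_nonneg (fun _ _ => zetaTerm_nonneg _ _) _)
    fun _ => indicator_le_indicator_of_subset (mzvIndexSet_subset_mzvStarIndexSet r)
      (fun _ => zetaTerm_nonneg _ _) _

def finSumFinRevEquiv {j m : ℕ} (hj : j ≤ m) : Fin j ⊕ Fin (m - j) ≃ Fin m :=
  (Equiv.sumCongr (Equiv.refl _) Fin.revPerm).trans
    (finSumFinEquiv.trans (finCongr (Nat.add_sub_cancel' hj)))

@[simp]
lemma finSumFinRevEquiv_inl {j m : ℕ} (hj : j ≤ m) (i : Fin j) :
    (finSumFinRevEquiv hj (Sum.inl i) : ℕ) = i := by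
  simp [finSumFinRevEquiv]

@[simp]
lemma finSumFinRevEquiv_inr {j m : ℕ} (hj : j ≤ m) (i : Fin (m - j)) :
    (finSumFinRevEquiv hj (Sum.inr i) : ℕ) = m - 1 - i := by
  simp [finSumFinRevEquiv]
  omega

def appendRevEquiv {α : Type*} {j m : ℕ} (hj : j ≤ m) :
    (Fin j → α) × (Fin (m - j) → α) ≃ (Fin m → α) :=
  (Equiv.sumArrowEquivProdArrow _ _ _).symm.trans
    ((finSumFinRevEquiv hj).arrowCongr (Equiv.refl α))

@[simp]
lemma appendRevEquiv_apply_inl {α : Type*} {j m : ℕ} (hj : j ≤ m) (p : Fin j → α)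
    (q : Fin (m - j) → α) (i : Fin j) :
    appendRevEquiv hj (p, q) (finSumFinRevEquiv hj (Sum.inl i)) = p i := by
  simp [appendRevEquiv]

@[simp]
lemma appendRevEquiv_apply_inr {α : Type*} {j m : ℕ} (hj : j ≤ m) (p : Fin j → α)
    (q : Fin (m - j) → α) (i : Fin (m - j)) :
    appendRevEquiv hj (p, q) (finSumFinRevEquiv hj (Sum.inr i)) = q i := by
  simp [appendRevEquiv]

lemma zetaTerm_appendRevEquiv {j m : ℕ} (hj : j ≤ m) (k : ℕ → ℕ)
    (p : Fin j → ℕ) (q : Fin (m - j) → ℕ) :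
    zetaTerm k (appendRevEquiv hj (p, q)) =
      zetaTerm k p * zetaTerm (fun i => k (m - 1 - i)) q := by
  simp only [zetaTerm, ← (finSumFinRevEquiv hj).prod_comp, Fintype.prod_sum_type,
    appendRevEquiv_apply_inl, appendRevEquiv_apply_inr, finSumFinRevEquiv_inl,
    finSumFinRevEquiv_inr]

def descAscIndexSet (m j : ℕ) : Set (Fin m → ℕ) :=
  {n | (∀ a b : Fin m, a < b → (b : ℕ) < j → n b < n a) ∧
    (∀ a b : Fin m, a < b → j ≤ (a : ℕ) → n a ≤ n b) ∧ ∀ i, 1 ≤ n i}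

lemma appendRevEquiv_mem_descAscIndexSet_iff {j m : ℕ} (hj : j ≤ m)
    (p : Fin j → ℕ) (q : Fin (m - j) → ℕ) :
    appendRevEquiv hj (p, q) ∈ descAscIndexSet m j ↔
      p ∈ mzvIndexSet j ∧ q ∈ mzvStarIndexSet (m - j) := by
  have h₁ (b : Fin (m - j)) : ¬ m - 1 - (b : ℕ) < j := by omega
  have h₂ (b : Fin (m - j)) : j ≤ m - 1 - (b : ℕ) := by omega
  have h₃ (a : Fin j) : ¬ j ≤ (a : ℕ) := by omega
  have h₄ (a : Fin j) (b : Fin (m - j)) : ¬ m - 1 - (b : ℕ) < a := by omega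
  have h₅ (a b : Fin (m - j)) : m - 1 - (a : ℕ) < m - 1 - b ↔ b < a := by rw [Fin.lt_def]; omega
  simp only [descAscIndexSet, mzvIndexSet, mzvStarIndexSet, mem_ofPred_eq,
    ← (finSumFinRevEquiv hj).forall_congr_right, Sum.forall, Fin.lt_def,
    appendRevEquiv_apply_inl, appendRevEquiv_apply_inr, finSumFinRevEquiv_inl,
    finSumFinRevEquiv_inr, h₁, h₂, h₃, h₄, h₅, forall_and, Fin.is_lt, false_imp_iff, imp_true_iff,
    true_imp_iff, and_true]
  tauto

lemma hasSum_indicator_descAscIndexSet {m j : ℕ} (hj : j ≤ m) {k : ℕ → ℕ}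
    (hk : ∀ i < m, 0 < k i) (h1 : 2 ≤ k 0) (h2 : 2 ≤ k (m - 1)) :
    HasSum ((descAscIndexSet m j).indicator (zetaTerm k))
      (mzv j k * mzvStar (m - j) fun i => k (m - 1 - i)) := by
  have hstrict := hasSum_mzv (r := j) h1 fun i hi => hk i (by omega)
  have hstar := hasSum_mzvStar (r := m - j) (l := fun i => k (m - 1 - i)) (by simpa using h2)
    fun i hi => hk _ (by omega)
  have hsum := hstrict.summable.mul_of_nonneg hstar.summable
    (fun x => zetaTerm_nonneg k x.1) fun x => zetaTerm_nonneg _ x.1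
  have hprod := hstrict.mul hstar hsum
  let E : mzvIndexSet j × mzvStarIndexSet (m - j) ≃ descAscIndexSet m j :=
    Equiv.subtypeProdEquivProd.symm.trans <| (appendRevEquiv hj).subtypeEquiv
      fun pq => (appendRevEquiv_mem_descAscIndexSet_iff hj pq.1 pq.2).symm
  have hterm : (fun n : descAscIndexSet m j => zetaTerm k n.1) ∘ E =
      fun pq => zetaTerm k pq.1.1 * zetaTerm (fun i => k (m - 1 - i)) pq.2.1 :=
    funext fun pq => zetaTerm_appendRevEquiv hj k pq.1.1 pq.2.1
  rw [← hasSum_subtype_iff_indicator, ← E.hasSum_iff]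
  exact hterm ▸ hprod

def DescThenAsc {α : Type*} [Preorder α] (m j : ℕ) (N : ℕ → α) : Prop :=
  (∀ a b, a < b → b < j → N b < N a) ∧ ∀ a b, j ≤ a → a < b → b < m → N a ≤ N b

section DescThenAsc

variable {α : Type*} {m j : ℕ} {N : ℕ → α}

lemma DescThenAsc.succ [Preorder α] (h : DescThenAsc m j N) (hj : 0 < j → N j < N (j - 1)) :
    DescThenAsc m (j + 1) N := by
  refine ⟨fun a b hab hb => ?_, fun a b ha hab hb => h.2 a b (by omega) hab hb⟩
  rcases Nat.lt_or_ge b j with hbj | hbj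
  · exact h.1 a b hab hbj
  obtain rfl : b = j := by omega
  rcases Nat.lt_or_ge a (b - 1) with ha | ha
  · exact (hj (by omega)).trans (h.1 a (b - 1) ha (by omega))
  · obtain rfl : a = b - 1 := by omega
    exact hj (by omega)

lemma DescThenAsc.pred [Preorder α] (h : DescThenAsc m j N) (hj : j < m → N (j - 1) ≤ N j) :
    DescThenAsc m (j - 1) N := by
  refine ⟨fun a b hab hb => h.1 a b hab (by omega), fun a b ha hab hb => ?_⟩
  rcases Nat.lt_or_ge a j with haj | haj
  · obtain rfl : a = j - 1 := by omega
    rcases Nat.lt_or_ge j b with hjb | hjb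
    · exact (hj (by omega)).trans (h.2 j b le_rfl hjb hb)
    · obtain rfl : b = j := by omega
      exact hj hb
  · exact h.2 a b haj hab hb

open Classical in
theorem sum_filter_descThenAsc_neg_one_pow [LinearOrder α] {R : Type*} [Ring R] (N : ℕ → α)
    (hm : 0 < m) :
    ∑ j ∈ range (m + 1) with DescThenAsc m j N, (-1 : R) ^ j = 0 := by
  let up j := j < m ∧ (0 < j → N j < N (j - 1))
  have up_succ : ∀ j, DescThenAsc m j N → up j → DescThenAsc m (j + 1) N ∧ ¬ up (j + 1) :=
    fun j h hup => ⟨h.succ hup.2, fun hup' =>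
      (h.2 j (j + 1) le_rfl (by omega) hup'.1).not_gt (hup'.2 (by omega))⟩
  have down : ∀ j, j ≤ m → DescThenAsc m j N → ¬ up j →
      0 < j ∧ DescThenAsc m (j - 1) N ∧ up (j - 1) := by
    intro j hjm h hup
    have hj : 0 < j := by
      by_contra hj0
      exact hup ⟨by omega, by omega⟩
    refine ⟨hj, h.pred fun hjm' => ?_, by omega,
      fun _ => h.1 (j - 1 - 1) (j - 1) (by omega) (by omega)⟩
    by_contra hlt
    exact hup ⟨hjm', fun _ => lt_of_not_ge hlt⟩
  refine sum_involution (fun j _ => if up j then j + 1 else j - 1) ?_ ?_ ?_ ?_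
  · intro j hj
    rw [mem_filter, Finset.mem_range] at hj
    by_cases hup : up j
    · simp [hup, pow_succ]
    · obtain ⟨hj0, -⟩ := down j (by omega) hj.2 hup
      obtain ⟨i, rfl⟩ : ∃ i, j = i + 1 := ⟨j - 1, by omega⟩
      simp [hup, pow_succ]
  · intro j hj _
    rw [mem_filter, Finset.mem_range] at hj
    by_cases hup : up j
    · simp [hup]
    · obtain ⟨hj0, -⟩ := down j (by omega) hj.2 hup
      simp only [hup, if_false]
      omega
  · intro j hj
    rw [mem_filter, Finset.mem_range] at hj
    by_cases hup : up j
    · simpa [hup, mem_filter] using ⟨hup.1, (up_succ j hj.2 hup).1⟩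
    · obtain ⟨hj0, hdown, -⟩ := down j (by omega) hj.2 hup
      simpa [hup, mem_filter] using ⟨by omega, hdown⟩
  · intro j hj
    rw [mem_filter, Finset.mem_range] at hj
    by_cases hup : up j
    · simp [hup, (up_succ j hj.2 hup).2]
    · obtain ⟨hj0, -, hup'⟩ := down j (by omega) hj.2 hup
      simp only [hup, hup', if_false, if_true]
      omega

end DescThenAsc

lemma mem_descAscIndexSet_iff {m j : ℕ} (hj : j ≤ m) (n : Fin m → ℕ) :
    n ∈ descAscIndexSet m j ↔
      DescThenAsc m j (fun i => if h : i < m then n ⟨i, h⟩ else 0) ∧ ∀ i, 1 ≤ n i := by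
  refine and_assoc.symm.trans <| and_congr (and_congr
    ⟨fun h a b hab hb => ?_, fun h a b hab hb => ?_⟩
    ⟨fun h a b ha hab hb => ?_, fun h a b hab ha => ?_⟩) Iff.rfl
  · simpa [dif_pos (show a < m by omega), dif_pos (show b < m by omega)] using
      h ⟨a, by omega⟩ ⟨b, by omega⟩ hab hb
  · simpa using h a b hab hb
  · simpa [dif_pos (show a < m by omega), dif_pos hb] using h ⟨a, by omega⟩ ⟨b, hb⟩ hab ha
  · simpa using h a b ha hab b.2

lemma sum_neg_one_pow_mul_indicator_descAscIndexSet {m : ℕ} (hm : 0 < m)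
    (f : (Fin m → ℕ) → ℝ) (n : Fin m → ℕ) :
    ∑ j ∈ range (m + 1), (-1 : ℝ) ^ j * (descAscIndexSet m j).indicator f n = 0 := by
  classical
  by_cases hpos : ∀ i, 1 ≤ n i
  · calc ∑ j ∈ range (m + 1), (-1 : ℝ) ^ j * (descAscIndexSet m j).indicator f n
        = ∑ j ∈ range (m + 1) with DescThenAsc m j (fun i => if h : i < m then n ⟨i, h⟩ else 0),
            (-1 : ℝ) ^ j * f n := by
          rw [sum_filter]
          refine sum_congr rfl fun j hj => ?_
          simp [indicator_apply, hpos,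
            mem_descAscIndexSet_iff (Nat.lt_succ_iff.1 (Finset.mem_range.1 hj))]
      _ = 0 := by rw [← sum_mul, sum_filter_descThenAsc_neg_one_pow _ hm, zero_mul]
  · exact sum_eq_zero fun j _ => by rw [indicator_of_notMem fun h => hpos h.2.2, mul_zero]

/-- For an index `𝕜 = (k₁,…,k_m)` with `k₁ ≥ 2` and `k_m ≥ 2`:
`∑_{j=0}^{m} (-1)^j ζ(k₁,…,k_j) ζ^⋆(k_m,…,k_{j+1}) = 0` (with `ζ(∅)=ζ^⋆(∅)=1`). -/
theorem mzv_antipode (m : ℕ) (hm : 0 < m) (k : ℕ → ℕ) (hk : ∀ i < m, 0 < k i)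
    (h1 : 2 ≤ k 0) (h2 : 2 ≤ k (m - 1)) :
    ∑ j ∈ Finset.range (m + 1),
        (-1 : ℝ) ^ j * mzv j k * mzvStar (m - j) (fun i => k (m - 1 - i)) = 0 := by
  have hterm : ∀ j ∈ range (m + 1),
      HasSum (fun n => (-1 : ℝ) ^ j * (descAscIndexSet m j).indicator (zetaTerm k) n)
        ((-1 : ℝ) ^ j * mzv j k * mzvStar (m - j) (fun i => k (m - 1 - i))) := fun j hj => by
    rw [mul_assoc]
    exact (hasSum_indicator_descAscIndexSet (Nat.lt_succ_iff.1 (Finset.mem_range.1 hj))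
      hk h1 h2).mul_left _
  have hcancel : (fun n => ∑ j ∈ range (m + 1),
      (-1 : ℝ) ^ j * (descAscIndexSet m j).indicator (zetaTerm k) n) = 0 :=
    funext (sum_neg_one_pow_mul_indicator_descAscIndexSet hm _)
  exact (hasSum_sum hterm).unique (hcancel ▸ hasSum_zero)
end

section
/- Let p be a prime with p > m + 1, where m ≥ 1. Then ∑_{p-1 ≥ n₁ ≥ n₂ ≥ ⋯ ≥ n_m ≥ 1} 1/(n₁^k ⋯ n_m^k) ≡ 0 (mod p) whenever p > mk + 1, where k ≥ 1; i.e., the truncated multiple zeta-star sum ζ_{p-1}^⋆({k}^m) vanishes modulo p. -/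
/-!
Modulo `p` the sum runs over the size-`m` multisets of units `u` of `𝔽_p` of the product of
`χ u = u⁻¹ ^ k`. Multiplying a multiset by a fixed unit `g` permutes these multisets and scales
each term by `χ g ^ m = g⁻¹ ^ (m * k)`, which is not `1` for a generator `g` because
`0 < m * k < p - 1`; hence the sum vanishes in `𝔽_p`. The rational sum lifts to `ℤ_[p]`, where
reduction modulo `p` is `toZMod`, so its `p`-adic norm is at most `p⁻¹`.
-/

open Finset

theorem Finset.sum_filter_antitone_eq_sum_sym {α β : Type*} [LinearOrder α] [AddCommMonoid β]
    (s : Finset α) (m : ℕ) (F : Multiset α → β) :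
    ∑ n ∈ (Fintype.piFinset fun _ : Fin m => s).filter (fun n => Antitone n),
      F (univ.val.map n) = ∑ M ∈ s.sym m, F M := by
  refine sum_bij (fun n _ => (⟨univ.val.map n, by simp⟩ : Sym α m)) ?_ ?_ ?_ (fun _ _ => rfl)
  · intro n hn
    rw [mem_filter, Fintype.mem_piFinset] at hn
    refine mem_sym_iff.mpr fun a ha => ?_
    rw [Sym.mem_mk, Multiset.mem_map] at ha
    obtain ⟨i, -, rfl⟩ := ha
    exact hn.1 i
  · intro n₁ hn₁ n₂ hn₂ h
    simp only [mem_filter] at hn₁ hn₂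
    have h' : (List.ofFn n₁ : Multiset α) = List.ofFn n₂ := by
      simpa [Fin.univ_val_map] using congrArg Subtype.val h
    exact List.ofFn_injective
      ((Multiset.coe_eq_coe.mp h').eq_of_sortedGE hn₁.2.sortedGE_ofFn hn₂.2.sortedGE_ofFn)
  · intro M hM
    set l := M.1.sort (· ≥ ·)
    have hl : l.length = m := by simp [l]
    have hofFn : List.ofFn (fun i => l.get (i.cast hl.symm)) = l :=
      (List.ofFn_congr hl.symm _).trans (List.ofFn_get l)
    refine ⟨fun i => l.get (i.cast hl.symm), ?_, ?_⟩
    · rw [mem_filter, Fintype.mem_piFinset]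
      refine ⟨fun i => mem_sym_iff.mp hM _ (Multiset.mem_sort _ |>.mp (List.get_mem _ _)), ?_⟩
      rw [← List.sortedGE_ofFn_iff, hofFn]
      exact (Multiset.pairwise_sort _ _).sortedGE
    · ext1
      rw [Sym.coe_mk, Fin.univ_val_map, hofFn, Multiset.sort_eq]
      rfl

theorem Sym.sum_prod_map_eq_zero_of_pow_ne_one {G R : Type*} [CommGroup G] [Fintype G]
    [DecidableEq G] [CommRing R] [NoZeroDivisors R] {m : ℕ} (χ : G →* R) {g : G}
    (hg : χ g ^ m ≠ 1) : ∑ M : Sym G m, (M.1.map χ).prod = 0 := by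
  set S := ∑ M : Sym G m, (M.1.map χ).prod
  have htranslate : S = χ g ^ m * S := calc
    S = ∑ M : Sym G m, ((M.map (g * ·)).1.map χ).prod :=
      (Fintype.sum_equiv (Sym.equivCongr (Equiv.mulLeft g)) _ _ fun _ => rfl).symm
    _ = χ g ^ m * S := by
      rw [mul_sum]
      refine sum_congr rfl fun M _ => ?_
      simp [Sym.coe_map, Multiset.map_map, Multiset.prod_map_mul]
  have : (χ g ^ m - 1) * S = 0 := by rw [sub_mul, ← htranslate]; ring
  exact (mul_eq_zero.mp this).resolve_left (sub_ne_zero.mpr hg)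

theorem map_ringInverse {M₀ α F : Type*} [MonoidWithZero M₀] [DivisionMonoid α] [FunLike F M₀ α]
    [MonoidHomClass F M₀ α] (f : F) {a : M₀} (ha : IsUnit a) :
    f (Ring.inverse a) = (f a)⁻¹ := by
  obtain ⟨u, rfl⟩ := ha
  rw [Ring.inverse_unit, map_units_inv]

namespace ZMod

variable {p : ℕ} [Fact p.Prime]

theorem exists_unit_pow_ne_one {n : ℕ} (hn₀ : 0 < n) (hn : n < p - 1) :
    ∃ g : (ZMod p)ˣ, g ^ n ≠ 1 := by
  obtain ⟨g, hg⟩ := IsCyclic.exists_ofOrder_eq_natCard (α := (ZMod p)ˣ)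
  refine ⟨g, fun h => ?_⟩
  have := orderOf_dvd_of_pow_eq_one h
  rw [hg, Nat.card_eq_fintype_card, ZMod.card_units] at this
  exact absurd (Nat.le_of_dvd hn₀ this) (by omega)

variable (p) in
@[simps]
def unitsValEmbedding : (ZMod p)ˣ ↪ ℕ :=
  ⟨fun u => (u : ZMod p).val, fun _ _ h => Units.ext (ZMod.val_injective p h)⟩

theorem map_unitsValEmbedding_univ : univ.map (unitsValEmbedding p) = Icc 1 (p - 1) := by
  have hp := (Fact.out : p.Prime).two_le
  ext n
  simp only [mem_map, mem_univ, true_and, mem_Icc, unitsValEmbedding_apply]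
  constructor
  · rintro ⟨u, rfl⟩
    have := (u : ZMod p).val_lt
    have : (u : ZMod p).val ≠ 0 := (ZMod.val_ne_zero _).mpr u.ne_zero
    omega
  · rintro ⟨h1, h2⟩
    have hlt : n < p := by omega
    refine ⟨Units.mk0 (n : ZMod p) ?_, ZMod.val_cast_of_lt hlt⟩
    rw [Ne, ZMod.natCast_eq_zero_iff]
    exact Nat.not_dvd_of_pos_of_lt h1 hlt

theorem sum_sym_Icc_eq_sum_sym_units {R : Type*} [CommSemiring R] (m : ℕ) (f : ZMod p → R) :
    ∑ M ∈ (Icc 1 (p - 1)).sym m, (M.1.map fun n : ℕ => f n).prod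
      = ∑ M : Sym (ZMod p)ˣ m, (M.1.map fun u : (ZMod p)ˣ => f u).prod := by
  rw [← map_unitsValEmbedding_univ, sym_map, sym_univ, sum_map]
  refine sum_congr rfl fun M _ => ?_
  simp [Sym.coe_map, Multiset.map_map, ZMod.natCast_val]

theorem sum_antitone_prod_inv_pow_eq_zero {m k : ℕ} (h₀ : 0 < m * k) (h : m * k < p - 1) :
    ∑ n ∈ (Fintype.piFinset fun _ : Fin m => Icc 1 (p - 1)).filter (fun n => Antitone n),
      ∏ i, ((n i : ZMod p))⁻¹ ^ k = 0 := by
  obtain ⟨g, hg⟩ := exists_unit_pow_ne_one h₀ h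
  let χ : (ZMod p)ˣ →* ZMod p :=
    { toFun := fun u => (u : ZMod p)⁻¹ ^ k
      map_one' := by simp
      map_mul' := fun u v => by simp only [Units.val_mul, mul_inv, mul_pow] }
  have hχ : χ g⁻¹ ^ m ≠ 1 := by
    have : χ g⁻¹ ^ m = ((g ^ (m * k) : (ZMod p)ˣ) : ZMod p) := by
      change (((g⁻¹ : (ZMod p)ˣ) : ZMod p)⁻¹ ^ k) ^ m = _
      rw [Units.val_inv_eq_inv_val, inv_inv, ← pow_mul, mul_comm, Units.val_pow_eq_pow_val]
    rwa [this, Ne, Units.val_eq_one]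
  calc _ = ∑ n ∈ (Fintype.piFinset fun _ : Fin m => Icc 1 (p - 1)).filter (fun n => Antitone n),
        ((univ.val.map n).map fun n : ℕ => ((n : ZMod p))⁻¹ ^ k).prod := by
        simp only [Multiset.map_map]; rfl
    _ = ∑ M ∈ (Icc 1 (p - 1)).sym m, (M.1.map fun n : ℕ => ((n : ZMod p))⁻¹ ^ k).prod :=
        sum_filter_antitone_eq_sum_sym _ _ fun M => (M.map _).prod
    _ = ∑ M : Sym (ZMod p)ˣ m, (M.1.map χ).prod :=
        sum_sym_Icc_eq_sum_sym_units m (fun a => a⁻¹ ^ k) |>.trans rfl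
    _ = 0 := Sym.sum_prod_map_eq_zero_of_pow_ne_one χ hχ

end ZMod

namespace PadicInt

variable {p : ℕ} [Fact p.Prime]

theorem norm_le_zpow_neg_one_of_toZMod_eq_zero {x : ℤ_[p]} (hx : toZMod x = 0) :
    ‖x‖ ≤ (p : ℝ) ^ (-1 : ℤ) := by
  have hmax : x ∈ IsLocalRing.maximalIdeal ℤ_[p] := ker_toZMod (p := p) ▸ RingHom.mem_ker.mpr hx
  rw [norm_le_pow_iff_norm_lt_pow_add_one, neg_add_cancel, zpow_zero]
  exact mem_nonunits.mp hmax

theorem isUnit_natCast_of_pos_of_lt {n : ℕ} (h₀ : 0 < n) (h : n < p) : IsUnit (n : ℤ_[p]) := by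
  rw [isUnit_iff, norm_natCast_eq_one_iff, Nat.Prime.coprime_iff_not_dvd Fact.out]
  exact Nat.not_dvd_of_pos_of_lt h₀ h

end PadicInt

/-- For positive integers `m, k` and a prime `p > mk + 1`, the truncated multiple
zeta-star sum `ζ^⋆_{p-1}({k}^m) = ∑_{p-1 ≥ n₁ ≥ ⋯ ≥ n_m ≥ 1} 1/(n₁^k⋯n_m^k)`
vanishes modulo `p`. -/
theorem zeta_star_truncated_vanishes (p m k : ℕ) (hp : p.Prime)
    (hm : 0 < m) (hk : 0 < k) (hbound : m * k + 1 < p) :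
    haveI : Fact p.Prime := ⟨hp⟩
    ‖(((∑ n ∈ Finset.filter
          (fun n : Fin m → ℕ => ∀ a b : Fin m, a ≤ b → n b ≤ n a)
          (Fintype.piFinset fun _ => Finset.Icc 1 (p - 1)),
        ∏ i : Fin m, (1 : ℚ) / (n i : ℚ) ^ k) : ℚ) : ℚ_[p])‖
      ≤ (p : ℝ) ^ (-1 : ℤ) := by
  have : Fact p.Prime := ⟨hp⟩
  set T := (Fintype.piFinset fun _ : Fin m => Icc 1 (p - 1)).filter (fun n => Antitone n)
  have hunit : ∀ n ∈ T, ∀ i, IsUnit ((n i : ℕ) : ℤ_[p]) := fun n hn i => by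
    have hni := mem_Icc.mp (Fintype.mem_piFinset.mp (mem_filter.mp hn).1 i)
    exact PadicInt.isUnit_natCast_of_pos_of_lt hni.1 (by omega)
  set z : ℤ_[p] := ∑ n ∈ T, ∏ i, Ring.inverse ((n i : ℕ) : ℤ_[p]) ^ k
  have hcoe : (((∑ n ∈ T, ∏ i : Fin m, (1 : ℚ) / (n i : ℚ) ^ k) : ℚ) : ℚ_[p]) = z := by
    change _ = PadicInt.Coe.ringHom z
    push_cast
    simp only [z, map_sum, map_prod, map_pow]
    refine sum_congr rfl fun n hn => prod_congr rfl fun i _ => ?_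
    rw [map_ringInverse _ (hunit n hn i), map_natCast, one_div, inv_pow]
  have hz : PadicInt.toZMod z = 0 := by
    simp only [z, map_sum, map_prod, map_pow]
    rw [sum_congr rfl fun n hn => prod_congr rfl fun i _ => by
      rw [map_ringInverse _ (hunit n hn i), map_natCast]]
    exact ZMod.sum_antitone_prod_inv_pow_eq_zero (Nat.mul_pos hm hk) (by omega)
  change ‖(((∑ n ∈ T, ∏ i : Fin m, (1 : ℚ) / (n i : ℚ) ^ k) : ℚ) : ℚ_[p])‖ ≤ _
  rw [hcoe, PadicInt.padic_norm_e_of_padicInt]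
  exact PadicInt.norm_le_zpow_neg_one_of_toZMod_eq_zero hz
end

section
/- Let p > 3 be a prime. Then ∑_{p-1 ≥ n₁ ≥ n₂ ≥ n₃ ≥ 1} (-1)^{n₁+n₂+n₃}/(n₁ n₂ n₃) ≡ −(4/3)·q_p(2)³ − (1/6)·B_{p-3} (mod p), where q_p(2) = (2^{p-1}−1)/p is the Fermat quotient. -/
/-!
Put `aₙ = (-1)ⁿ / n`. The sum over weakly decreasing triples is the complete homogeneous
symmetric polynomial `h₃(a₁, …, a_{p-1})`, and `6 h₃ = P₁³ + 3 P₁ H₂ + 2 P₃` with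
`P_r = ∑ (-1)ⁿ / nʳ` and `H_r = ∑ 1 / nʳ`. Modulo `p`, `1 / nʳ ≡ n^{p-1-r}`, so `H_r ≡ 0` for
`r ≤ p - 2`, and separating the even `n` gives `P_r = 2^{1-r} T_r - H_r` with
`T_r = ∑_{k ≤ (p-1)/2} 1 / kʳ ≡ ∑_{k < (p+1)/2} k^{p-1-r}`. Faulhaber's formula evaluates this
power sum through the Bernoulli polynomial `B_{p-r}` at `(p + 1) / 2 ≡ 1 / 2`, where
`B_m(1/2) = (2^{1-m} - 1) B_m`. With `p B_{p-1} ≡ -1` (von Staudt–Clausen) this gives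
`T₁ ≡ -2 q_p(2)` and `T₃ ≡ -2 B_{p-3}`, so `P₁ ≡ -2 q_p(2)`, `P₃ ≡ -B_{p-3} / 2` and
`6 h₃ ≡ -8 q_p(2)³ - B_{p-3}`.
-/

open Finset

section Identities

variable {R : Type*} [CommRing R]

theorem two_mul_sum_Icc_sum_Icc (a : ℕ → R) (N : ℕ) :
    2 * ∑ n₁ ∈ Icc 1 N, ∑ n₂ ∈ Icc 1 n₁, a n₁ * a n₂
      = (∑ n ∈ Icc 1 N, a n) ^ 2 + ∑ n ∈ Icc 1 N, a n ^ 2 := by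
  induction N with
  | zero => simp
  | succ N ih =>
    have hle : 1 ≤ N + 1 := by omega
    rw [sum_Icc_succ_top hle, sum_Icc_succ_top hle a, sum_Icc_succ_top hle (a · ^ 2),
      sum_Icc_succ_top hle, ← mul_sum]
    linear_combination ih

theorem six_mul_sum_Icc_sum_Icc_sum_Icc (a : ℕ → R) (N : ℕ) :
    6 * ∑ n₁ ∈ Icc 1 N, ∑ n₂ ∈ Icc 1 n₁, ∑ n₃ ∈ Icc 1 n₂, a n₁ * a n₂ * a n₃
      = (∑ n ∈ Icc 1 N, a n) ^ 3 + 3 * (∑ n ∈ Icc 1 N, a n) * ∑ n ∈ Icc 1 N, a n ^ 2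
        + 2 * ∑ n ∈ Icc 1 N, a n ^ 3 := by
  induction N with
  | zero => simp
  | succ N ih =>
    have h2 := two_mul_sum_Icc_sum_Icc a (N + 1)
    have hle : 1 ≤ N + 1 := by omega
    rw [sum_Icc_succ_top hle a, sum_Icc_succ_top hle (a · ^ 2)] at h2
    rw [sum_Icc_succ_top hle, sum_Icc_succ_top hle a, sum_Icc_succ_top hle (a · ^ 2),
      sum_Icc_succ_top hle (a · ^ 3)]
    simp only [mul_assoc, ← mul_sum] at ih h2 ⊢
    linear_combination ih + 3 * a (N + 1) * h2

theorem sum_Icc_neg_one_pow_mul_add_sum_Icc (f : ℕ → R) (M : ℕ) :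
    ∑ n ∈ Icc 1 (2 * M), (-1) ^ n * f n + ∑ n ∈ Icc 1 (2 * M), f n
      = 2 * ∑ k ∈ Icc 1 M, f (2 * k) := by
  rw [← sum_add_distrib]
  induction M with
  | zero => simp
  | succ M ih =>
    rw [mul_add_one, sum_Icc_succ_top (by omega), sum_Icc_succ_top (by omega), ih,
      sum_Icc_succ_top (by omega), (odd_two_mul_add_one M).neg_one_pow,
      show 2 * M + 1 + 1 = 2 * (M + 1) by omega, (even_two_mul (M + 1)).neg_one_pow]
    ring

theorem sum_range_succ_eq_sum_Icc {f : ℕ → R} (hf : f 0 = 0) (N : ℕ) :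
    ∑ n ∈ range (N + 1), f n = ∑ n ∈ Icc 1 N, f n := by
  rw [show range (N + 1) = insert 0 (Icc 1 N) by ext; simp; omega, sum_insert (by simp), hf,
    zero_add]

end Identities

theorem six_mul_sum_Icc_sum_Icc_sum_Icc_neg_one_pow_div {K : Type*} [Field K] (N : ℕ) :
    6 * ∑ n₁ ∈ Icc 1 N, ∑ n₂ ∈ Icc 1 n₁, ∑ n₃ ∈ Icc 1 n₂,
        (-1 : K) ^ (n₁ + n₂ + n₃) / (n₁ * n₂ * n₃)
      = (∑ n ∈ Icc 1 N, (-1) ^ n * (n : K)⁻¹) ^ 3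
        + 3 * (∑ n ∈ Icc 1 N, (-1) ^ n * (n : K)⁻¹) * ∑ n ∈ Icc 1 N, (n : K)⁻¹ ^ 2
        + 2 * ∑ n ∈ Icc 1 N, (-1) ^ n * (n : K)⁻¹ ^ 3 := by
  have hsq (n : ℕ) : ((-1) ^ n * (n : K)⁻¹) ^ 2 = (n : K)⁻¹ ^ 2 := by
    rw [mul_pow, ← pow_mul, mul_comm n 2, pow_mul, neg_one_sq, one_pow, one_mul]
  have hcube (n : ℕ) : ((-1) ^ n * (n : K)⁻¹) ^ 3 = (-1) ^ n * (n : K)⁻¹ ^ 3 := by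
    rw [pow_succ, hsq]; ring
  simp only [← hsq, ← hcube, ← six_mul_sum_Icc_sum_Icc_sum_Icc]
  congr 1
  refine sum_congr rfl fun _ _ => sum_congr rfl fun _ _ => sum_congr rfl fun _ _ => ?_
  rw [pow_add, pow_add, div_eq_mul_inv, mul_inv, mul_inv]
  ring

open PowerSeries in
theorem Polynomial.bernoulli_eval_inv_two (n : ℕ) :
    (bernoulli n).eval 2⁻¹ = (2 * 2⁻¹ ^ n - 1) * _root_.bernoulli n := by
  -- With `E = exp (X / 2)`, `exp X - 1 = (E - 1) (E + 1)` and `B(X / 2) (E - 1) = X / 2`, so the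
  -- generating function `X E / (exp X - 1)` of the `Bₙ(1/2)` is `2 B(X / 2) - B(X)`.
  set B := bernoulliPowerSeries ℚ
  set E := rescale (2⁻¹ : ℚ) (exp ℚ) with hE_def
  have hE : exp ℚ - 1 = (E - 1) * (E + 1) := by
    rw [mul_comm, ← mul_self_sub_one, hE_def, exp_mul_exp_eq_exp_add]; norm_num
  have hB : rescale (2⁻¹ : ℚ) B * (E - 1) = PowerSeries.C (2⁻¹ : ℚ) * PowerSeries.X := by
    simpa using congrArg (rescale (2⁻¹ : ℚ)) (bernoulliPowerSeries_mul_exp_sub_one ℚ)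
  have hC : PowerSeries.C (2 : ℚ) * PowerSeries.C (2⁻¹ : ℚ) = 1 := by
    rw [← map_mul]; norm_num
  have hexp : exp ℚ - 1 ≠ 0 := fun h => by
    simpa using congrArg (PowerSeries.coeff 1) h
  have key : (PowerSeries.mk fun n => aeval (2⁻¹ : ℚ) ((1 / (n.factorial : ℚ)) • bernoulli n))
      = PowerSeries.C (2 : ℚ) * rescale (2⁻¹ : ℚ) B - B := by
    refine mul_right_cancel₀ hexp ?_
    rw [bernoulli_generating_function, ← hE_def, sub_mul, bernoulliPowerSeries_mul_exp_sub_one,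
      hE]
    linear_combination (-PowerSeries.C (2 : ℚ) * (E + 1)) * hB - (PowerSeries.X * (E + 1)) * hC
  have := congrArg (PowerSeries.coeff n) key
  simp only [map_smul, coe_aeval_eq_eval, smul_eq_mul, coeff_mk, B, bernoulliPowerSeries,
    Algebra.algebraMap_self, RingHom.id_apply, map_sub, PowerSeries.coeff_C_mul,
    coeff_rescale] at this
  field_simp at this
  rw [← one_div, this, mul_comm, one_div]

section Congruence

variable {p : ℕ} [hp : Fact p.Prime]

variable (p) in
/-- The ring `ℤ_(p)` of `p`-integral rationals. -/
noncomputable def pIntegers : Subring ℚ := (PadicInt.subring p).comap (Rat.castHom ℚ_[p])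

theorem mem_pIntegers {x : ℚ} : x ∈ pIntegers p ↔ ‖(x : ℚ_[p])‖ ≤ 1 := Iff.rfl

theorem inv_natCast_mem_pIntegers {n : ℕ} (hn : ¬p ∣ n) : (n : ℚ)⁻¹ ∈ pIntegers p := by
  rw [mem_pIntegers, Rat.cast_inv, norm_inv, Rat.cast_natCast,
    Padic.norm_natCast_eq_one_iff.2 ((Nat.Prime.coprime_iff_not_dvd hp.out).2 hn), inv_one]

theorem inv_natCast_mem_pIntegers_of_lt {n : ℕ} (hn : n < p) : (n : ℚ)⁻¹ ∈ pIntegers p := by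
  rcases Nat.eq_zero_or_pos n with rfl | hn0
  · simp
  · exact inv_natCast_mem_pIntegers (Nat.not_dvd_of_pos_of_lt hn0 hn)

theorem inv_two_mem_pIntegers (hp2 : p ≠ 2) : (2 : ℚ)⁻¹ ∈ pIntegers p := by
  exact_mod_cast inv_natCast_mem_pIntegers_of_lt (hp.out.two_le.lt_of_ne' hp2)

variable (p) in
def Rat.ModEq (x y : ℚ) : Prop := (x - y) / p ∈ pIntegers p

notation:50 x " ≡ " y " mod " p => Rat.ModEq p x y

namespace Rat.ModEq

variable {x y z x' y' c : ℚ}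

@[refl] protected theorem refl (x : ℚ) : x ≡ x mod p := by
  simp [Rat.ModEq, zero_mem]

protected theorem rfl : x ≡ x mod p := .refl x

protected theorem symm (h : x ≡ y mod p) : y ≡ x mod p := by
  rw [Rat.ModEq, ← neg_sub, neg_div]; exact neg_mem h

protected theorem trans (h : x ≡ y mod p) (h' : y ≡ z mod p) : x ≡ z mod p := by
  rw [Rat.ModEq, ← sub_add_sub_cancel x y z, add_div]; exact add_mem h h'

instance : Trans (Rat.ModEq p) (Rat.ModEq p) (Rat.ModEq p) := ⟨Rat.ModEq.trans⟩

protected theorem add (h : x ≡ y mod p) (h' : x' ≡ y' mod p) : x + x' ≡ y + y' mod p := by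
  rw [Rat.ModEq, add_sub_add_comm, add_div]; exact add_mem h h'

protected theorem sub (h : x ≡ y mod p) (h' : x' ≡ y' mod p) : x - x' ≡ y - y' mod p := by
  rw [Rat.ModEq, sub_sub_sub_comm, sub_div]; exact sub_mem h h'

protected theorem sum {ι : Type*} {s : Finset ι} {f g : ι → ℚ}
    (h : ∀ i ∈ s, f i ≡ g i mod p) : ∑ i ∈ s, f i ≡ ∑ i ∈ s, g i mod p := by
  rw [Rat.ModEq, ← sum_sub_distrib, sum_div]; exact sum_mem h

protected theorem mul_left (hc : c ∈ pIntegers p) (h : x ≡ y mod p) : c * x ≡ c * y mod p := by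
  rw [Rat.ModEq, ← mul_sub, mul_div_assoc]; exact mul_mem hc h

protected theorem mul_right (hc : c ∈ pIntegers p) (h : x ≡ y mod p) : x * c ≡ y * c mod p := by
  simpa only [mul_comm _ c] using h.mul_left hc

protected theorem mul (hx : x ∈ pIntegers p) (hy' : y' ∈ pIntegers p) (h : x ≡ y mod p)
    (h' : x' ≡ y' mod p) : x * x' ≡ y * y' mod p :=
  (h'.mul_left hx).trans (h.mul_right hy')

protected theorem pow (hx : x ∈ pIntegers p) (hy : y ∈ pIntegers p) (h : x ≡ y mod p)
    (n : ℕ) : x ^ n ≡ y ^ n mod p := by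
  induction n with
  | zero => simpa only [pow_zero] using .refl 1
  | succ n ih => simpa only [pow_succ] using ih.mul (pow_mem hx n) hy h

protected theorem polynomial_eval {P : Polynomial ℚ} (hP : ∀ i, 1 ≤ i → P.coeff i ∈ pIntegers p)
    (hx : x ∈ pIntegers p) (hy : y ∈ pIntegers p) (h : x ≡ y mod p) :
    P.eval x ≡ P.eval y mod p := by
  rw [Polynomial.eval_eq_sum_range, Polynomial.eval_eq_sum_range]
  refine Rat.ModEq.sum fun i _ => ?_
  rcases Nat.eq_zero_or_pos i with rfl | hi
  · simp only [pow_zero]; rfl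
  · exact (h.pow hx hy i).mul_left (hP i hi)

theorem cancel_left (hc : c ≠ 0) (hc' : c⁻¹ ∈ pIntegers p) (h : c * x ≡ c * y mod p) :
    x ≡ y mod p := by
  simpa only [inv_mul_cancel_left₀ hc] using h.mul_left hc'

theorem norm_sub_le (h : x ≡ y mod p) : ‖((x - y : ℚ) : ℚ_[p])‖ ≤ (p : ℝ)⁻¹ := by
  have hp0 : (p : ℚ) ≠ 0 := Nat.cast_ne_zero.2 hp.out.ne_zero
  rw [← mul_div_cancel₀ (x - y) hp0, Rat.cast_mul, norm_mul, Rat.cast_natCast, Padic.norm_p]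
  exact mul_le_of_le_one_right (by positivity) h

end Rat.ModEq

theorem Rat.natCast_self_modEq_zero : (p : ℚ) ≡ 0 mod p := by
  rw [Rat.ModEq, sub_zero, div_self (Nat.cast_ne_zero.2 hp.out.ne_zero)]; exact one_mem _

theorem Rat.modEq_of_intCast_zmod_eq {a b : ℤ} (h : (a : ZMod p) = b) : (a : ℚ) ≡ b mod p := by
  obtain ⟨w, hw⟩ := (ZMod.intCast_eq_intCast_iff_dvd_sub a b p).1 h
  have hp0 : (p : ℚ) ≠ 0 := Nat.cast_ne_zero.2 hp.out.ne_zero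
  rw [Rat.ModEq, ← neg_sub, ← Int.cast_sub, hw, Int.cast_mul, Int.cast_natCast, neg_div,
    mul_div_cancel_left₀ _ hp0]
  exact neg_mem (intCast_mem _ w)

end Congruence

section PowerSums

variable {p : ℕ} [hp : Fact p.Prime]

theorem natCast_pow_card_sub_one_modEq {n : ℕ} (hn : ¬p ∣ n) : (n : ℚ) ^ (p - 1) ≡ 1 mod p := by
  have h := Rat.modEq_of_intCast_zmod_eq (p := p) (a := n ^ (p - 1)) (b := 1) <| by
    push_cast
    exact ZMod.pow_card_sub_one_eq_one (by rwa [Ne, ZMod.natCast_eq_zero_iff])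
  exact_mod_cast h

theorem inv_pow_modEq {n r : ℕ} (hn : ¬p ∣ n) (hr : r ≤ p - 1) :
    (n : ℚ)⁻¹ ^ r ≡ (n : ℚ) ^ (p - 1 - r) mod p := by
  have hn0 : (n : ℚ) ≠ 0 := by rintro h; exact hn (by simp [Nat.cast_eq_zero.1 h])
  calc (n : ℚ)⁻¹ ^ r = (n : ℚ)⁻¹ ^ r * 1 := (mul_one _).symm
    _ ≡ (n : ℚ)⁻¹ ^ r * (n : ℚ) ^ (p - 1) mod p :=
        (natCast_pow_card_sub_one_modEq hn).symm.mul_left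
          (pow_mem (inv_natCast_mem_pIntegers hn) r)
    _ = (n : ℚ) ^ (p - 1 - r) := by
        rw [← Nat.sub_add_cancel hr, pow_add, Nat.add_sub_cancel, inv_pow]
        field_simp

theorem sum_range_pow_modEq_zero {m : ℕ} (hm : m < p - 1) :
    ∑ n ∈ range p, (n : ℚ) ^ m ≡ 0 mod p := by
  have h := Rat.modEq_of_intCast_zmod_eq (p := p) (a := ∑ n ∈ range p, (n : ℤ) ^ m) (b := 0) <| by
    push_cast
    rw [← FiniteField.sum_pow_lt_card_sub_one (K := ZMod p) m (by rwa [ZMod.card])]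
    exact sum_nbij' (fun n => (n : ZMod p)) ZMod.val (fun _ _ => mem_univ _)
      (fun x _ => mem_range.2 (ZMod.val_lt x)) (fun a ha => ZMod.val_cast_of_lt (mem_range.1 ha))
      (fun x _ => ZMod.natCast_zmod_val x) (fun _ _ => rfl)
  exact_mod_cast h

theorem sum_Icc_inv_pow_modEq {N r : ℕ} (hN : N < p) (hr : r ≤ p - 1) :
    ∑ k ∈ Icc 1 N, (k : ℚ)⁻¹ ^ r ≡ ∑ k ∈ Icc 1 N, (k : ℚ) ^ (p - 1 - r) mod p :=
  Rat.ModEq.sum fun _ hk => inv_pow_modEq (Nat.not_dvd_of_pos_of_lt (mem_Icc.1 hk).1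
    ((mem_Icc.1 hk).2.trans_lt hN)) hr

theorem sum_Icc_inv_pow_modEq_zero {r : ℕ} (hr1 : 1 ≤ r) (hr : r + 2 ≤ p) :
    ∑ n ∈ Icc 1 (p - 1), (n : ℚ)⁻¹ ^ r ≡ 0 mod p := by
  have hp1 : p - 1 + 1 = p := Nat.sub_add_cancel hp.out.one_le
  calc ∑ n ∈ Icc 1 (p - 1), (n : ℚ)⁻¹ ^ r
      ≡ ∑ n ∈ Icc 1 (p - 1), (n : ℚ) ^ (p - 1 - r) mod p :=
        sum_Icc_inv_pow_modEq (by omega) (by omega)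
    _ = ∑ n ∈ range p, (n : ℚ) ^ (p - 1 - r) := by
        rw [← hp1, sum_range_succ_eq_sum_Icc (by simp; omega), hp1]
    _ ≡ 0 mod p := sum_range_pow_modEq_zero (by omega)

end PowerSums

section Bernoulli

variable {p : ℕ} [hp : Fact p.Prime]

theorem sum_one_div_primes_mem_pIntegers {s : Finset ℕ} (hs : ∀ q ∈ s, q.Prime ∧ q ≠ p) :
    ∑ q ∈ s, (1 : ℚ) / q ∈ pIntegers p :=
  sum_mem fun q hq => by
    rw [one_div]
    exact inv_natCast_mem_pIntegers fun h =>
      (hs q hq).2 ((Nat.prime_dvd_prime_iff_eq hp.out (hs q hq).1).1 h).symm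

theorem bernoulli_mem_pIntegers {m : ℕ} (hm : m < p - 1) : bernoulli m ∈ pIntegers p := by
  obtain ⟨k, rfl | rfl⟩ := m.even_or_odd'
  · obtain ⟨z, hz⟩ := Bernoulli.vonStaudt_clausen k
    rw [eq_sub_of_add_eq hz.symm]
    refine sub_mem (intCast_mem _ z) (sum_one_div_primes_mem_pIntegers fun q hq => ?_)
    have hq' := mem_filter.1 hq
    exact ⟨hq'.2.1, by have := mem_range.1 hq'.1; omega⟩
  · rcases k with _ | k
    · rw [bernoulli_one, neg_div, one_div]
      exact neg_mem (inv_two_mem_pIntegers (by omega))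
    · rw [bernoulli_eq_zero_of_odd (odd_two_mul_add_one _) (by omega)]
      exact zero_mem _

theorem natCast_mul_bernoulli_modEq : (p : ℚ) * bernoulli (p - 1) ≡ -1 mod p := by
  have hp0 : (p : ℚ) ≠ 0 := Nat.cast_ne_zero.2 hp.out.ne_zero
  rcases hp.out.eq_two_or_odd' with rfl | ⟨k, rfl⟩
  · norm_num [bernoulli_one]; rfl
  obtain ⟨z, hz⟩ := Bernoulli.vonStaudt_clausen k
  have hpk : 2 * k + 1 ∈ (range (2 * k + 2)).filter fun q => q.Prime ∧ q - 1 ∣ 2 * k :=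
    mem_filter.2 ⟨self_mem_range_succ _, hp.out, by simp⟩
  rw [← add_sum_erase _ _ hpk, ← add_assoc] at hz
  rw [Nat.add_sub_cancel, Rat.ModEq, sub_neg_eq_add, add_div, mul_div_cancel_left₀ _ hp0,
    eq_sub_of_add_eq hz.symm]
  refine sub_mem (intCast_mem _ z) (sum_one_div_primes_mem_pIntegers fun q hq => ?_)
  exact ⟨(mem_filter.1 (mem_of_mem_erase hq)).2.1, ne_of_mem_erase hq⟩

theorem coeff_bernoulli_mem_pIntegers {n i : ℕ} (hn : n < p) (hi : 1 ≤ i) :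
    (Polynomial.bernoulli n).coeff i ∈ pIntegers p := by
  rw [Polynomial.coeff_bernoulli]
  split_ifs with h
  · exact mul_mem (bernoulli_mem_pIntegers (by omega)) (natCast_mem _ _)
  · exact zero_mem _

end Bernoulli

section HalfSums

variable {p : ℕ} [hp : Fact p.Prime]

theorem sum_range_half_pow_modEq (hp2 : p ≠ 2) {m : ℕ} (hm : m + 1 < p) :
    ((m : ℚ) + 1) * ∑ k ∈ range ((p + 1) / 2), (k : ℚ) ^ m
      ≡ 2 * (2⁻¹ ^ (m + 1) - 1) * bernoulli (m + 1) mod p := by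
  have hp0 : (p : ℚ) ≠ 0 := Nat.cast_ne_zero.2 hp.out.ne_zero
  have h2 := inv_two_mem_pIntegers hp2
  have hhalf : (((p + 1) / 2 : ℕ) : ℚ) ≡ 2⁻¹ mod p := by
    obtain ⟨k, hk⟩ := hp.out.odd_of_ne_two hp2
    rw [Rat.ModEq, show (p + 1) / 2 = k + 1 by omega,
      show ((k + 1 : ℕ) : ℚ) - 2⁻¹ = p * 2⁻¹ by rw [hk]; push_cast; ring,
      mul_div_cancel_left₀ _ hp0]
    exact h2
  calc ((m : ℚ) + 1) * ∑ k ∈ range ((p + 1) / 2), (k : ℚ) ^ m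
      = (Polynomial.bernoulli (m + 1)).eval (((p + 1) / 2 : ℕ) : ℚ) - bernoulli (m + 1) :=
        Polynomial.sum_range_pow_eq_bernoulli_sub _ _
    _ ≡ (Polynomial.bernoulli (m + 1)).eval 2⁻¹ - bernoulli (m + 1) mod p :=
        (hhalf.polynomial_eval (fun i hi => coeff_bernoulli_mem_pIntegers hm hi)
          (natCast_mem _ _) h2).sub .rfl
    _ = 2 * (2⁻¹ ^ (m + 1) - 1) * bernoulli (m + 1) := by
        rw [Polynomial.bernoulli_eval_inv_two]; ring

theorem neg_mul_sum_Icc_half_inv_pow_modEq (hp2 : p ≠ 2) {r : ℕ} (hr1 : 1 ≤ r) (hr : r + 2 ≤ p) :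
    -(r : ℚ) * ∑ k ∈ Icc 1 ((p - 1) / 2), (k : ℚ)⁻¹ ^ r
      ≡ 2 * (2⁻¹ ^ (p - r) - 1) * bernoulli (p - r) mod p := by
  have hodd : p % 2 = 1 := Nat.odd_iff.1 (hp.out.odd_of_ne_two hp2)
  have hsum : ∑ k ∈ Icc 1 ((p - 1) / 2), (k : ℚ) ^ (p - 1 - r)
      = ∑ k ∈ range ((p + 1) / 2), (k : ℚ) ^ (p - 1 - r) := by
    rw [show (p + 1) / 2 = (p - 1) / 2 + 1 by omega, sum_range_succ_eq_sum_Icc (by simp; omega)]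
  have hcoef : ((p - 1 - r : ℕ) : ℚ) + 1 ≡ -r mod p := by
    rw [show ((p - 1 - r : ℕ) : ℚ) + 1 = p - r by
      rw [Nat.cast_sub (by omega), Nat.cast_sub hp.out.one_le]; ring, ← zero_sub]
    exact Rat.natCast_self_modEq_zero.sub .rfl
  calc -(r : ℚ) * ∑ k ∈ Icc 1 ((p - 1) / 2), (k : ℚ)⁻¹ ^ r
      ≡ -(r : ℚ) * ∑ k ∈ range ((p + 1) / 2), (k : ℚ) ^ (p - 1 - r) mod p := by
        rw [← hsum]
        exact (sum_Icc_inv_pow_modEq (by omega) (by omega)).mul_left (neg_mem (natCast_mem _ r))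
    _ ≡ (((p - 1 - r : ℕ) : ℚ) + 1) * ∑ k ∈ range ((p + 1) / 2), (k : ℚ) ^ (p - 1 - r) mod p :=
        hcoef.symm.mul_right (sum_mem fun k _ => pow_mem (natCast_mem _ k) _)
    _ ≡ 2 * (2⁻¹ ^ (p - r) - 1) * bernoulli (p - r) mod p := by
        simpa only [show p - 1 - r + 1 = p - r by omega] using
          sum_range_half_pow_modEq hp2 (m := p - 1 - r) (by omega)

theorem fermatQuotient_two_mem_pIntegers (hp2 : p ≠ 2) :
    (2 ^ (p - 1) - 1) / (p : ℚ) ∈ pIntegers p := by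
  have h := natCast_pow_card_sub_one_modEq (p := p) (n := 2)
    (Nat.not_dvd_of_pos_of_lt two_pos (hp.out.two_le.lt_of_ne' hp2))
  rw [Rat.ModEq] at h
  exact_mod_cast h

theorem inv_two_pow_card_sub_one_modEq (hp2 : p ≠ 2) : (2⁻¹ : ℚ) ^ (p - 1) ≡ 1 mod p := by
  have h := inv_pow_modEq (p := p) (n := 2) (r := p - 1)
    (Nat.not_dvd_of_pos_of_lt two_pos (hp.out.two_le.lt_of_ne' hp2)) le_rfl
  simpa only [Nat.cast_ofNat, Nat.sub_self, pow_zero] using h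

theorem sum_Icc_half_inv_modEq (hp2 : p ≠ 2) :
    ∑ k ∈ Icc 1 ((p - 1) / 2), (k : ℚ)⁻¹ ≡ -2 * ((2 ^ (p - 1) - 1) / p) mod p := by
  have hp0 : (p : ℚ) ≠ 0 := Nat.cast_ne_zero.2 hp.out.ne_zero
  have hq := fermatQuotient_two_mem_pIntegers hp2
  set q : ℚ := (2 ^ (p - 1) - 1) / p
  have h := neg_mul_sum_Icc_half_inv_pow_modEq hp2 le_rfl (r := 1)
    (by have := hp.out.two_le; omega)
  simp only [Nat.cast_one, pow_one] at h
  refine Rat.ModEq.cancel_left (c := -1) (by norm_num)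
    (by rw [inv_neg, inv_one]; exact neg_mem (one_mem _)) ?_
  calc -1 * ∑ k ∈ Icc 1 ((p - 1) / 2), (k : ℚ)⁻¹
      ≡ 2 * (2⁻¹ ^ (p - 1) - 1) * bernoulli (p - 1) mod p := h
    _ = (-2 * 2⁻¹ ^ (p - 1) * q) * (p * bernoulli (p - 1)) := by
        have hqp : q * p = 2 ^ (p - 1) - 1 := div_mul_cancel₀ _ hp0
        have hpow : (2⁻¹ : ℚ) ^ (p - 1) * 2 ^ (p - 1) = 1 := by rw [← mul_pow]; norm_num
        linear_combination (2 * 2⁻¹ ^ (p - 1) * bernoulli (p - 1)) * hqp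
          + (2 * bernoulli (p - 1)) * hpow
    _ ≡ (-2 * 1 * q) * -1 mod p := by
        refine Rat.ModEq.mul ?_ (neg_mem (one_mem _)) ?_ natCast_mul_bernoulli_modEq
        · exact mul_mem (mul_mem (neg_mem (ofNat_mem _ 2))
            (pow_mem (inv_two_mem_pIntegers hp2) _)) hq
        · exact ((inv_two_pow_card_sub_one_modEq hp2).mul_left
            (neg_mem (ofNat_mem _ 2))).mul_right hq
    _ = -1 * (-2 * q) := by ring

theorem sum_Icc_half_inv_pow_three_modEq (hp3 : 3 < p) :
    ∑ k ∈ Icc 1 ((p - 1) / 2), (k : ℚ)⁻¹ ^ 3 ≡ -2 * bernoulli (p - 3) mod p := by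
  have hp2 : p ≠ 2 := by omega
  have hp5 : 5 ≤ p := by
    have := Nat.odd_iff.1 (hp.out.odd_of_ne_two hp2); omega
  have h := neg_mul_sum_Icc_half_inv_pow_modEq hp2 (r := 3) (by norm_num) (by omega)
  have h3 : (3 : ℚ)⁻¹ ∈ pIntegers p := by exact_mod_cast inv_natCast_mem_pIntegers_of_lt hp3
  refine Rat.ModEq.cancel_left (c := -3) (by norm_num) (by rw [inv_neg]; exact neg_mem h3) ?_
  calc -3 * ∑ k ∈ Icc 1 ((p - 1) / 2), (k : ℚ)⁻¹ ^ 3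
      ≡ 2 * (2⁻¹ ^ (p - 3) - 1) * bernoulli (p - 3) mod p := by exact_mod_cast h
    _ = 2 * (4 * 2⁻¹ ^ (p - 1) - 1) * bernoulli (p - 3) := by
        rw [show p - 1 = p - 3 + 2 by omega, pow_add]; ring
    _ ≡ 2 * (4 * 1 - 1) * bernoulli (p - 3) mod p :=
        ((((inv_two_pow_card_sub_one_modEq hp2).mul_left (ofNat_mem _ 4)).sub .rfl).mul_left
          (ofNat_mem _ 2)).mul_right (bernoulli_mem_pIntegers (by omega))
    _ = -3 * (-2 * bernoulli (p - 3)) := by ring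

end HalfSums

section AlternatingSums

variable {p : ℕ} [hp : Fact p.Prime]

theorem sum_Icc_neg_one_pow_mul_inv_pow_modEq (hp2 : p ≠ 2) {r : ℕ} (hr1 : 1 ≤ r)
    (hr : r + 2 ≤ p) :
    ∑ n ∈ Icc 1 (p - 1), (-1) ^ n * (n : ℚ)⁻¹ ^ r
      ≡ 2 * 2⁻¹ ^ r * ∑ k ∈ Icc 1 ((p - 1) / 2), (k : ℚ)⁻¹ ^ r mod p := by
  have hodd : p % 2 = 1 := Nat.odd_iff.1 (hp.out.odd_of_ne_two hp2)
  have hsplit := sum_Icc_neg_one_pow_mul_add_sum_Icc (fun n => (n : ℚ)⁻¹ ^ r) ((p - 1) / 2)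
  rw [show 2 * ((p - 1) / 2) = p - 1 by omega] at hsplit
  calc ∑ n ∈ Icc 1 (p - 1), (-1) ^ n * (n : ℚ)⁻¹ ^ r
      = 2 * ∑ k ∈ Icc 1 ((p - 1) / 2), ((2 * k : ℕ) : ℚ)⁻¹ ^ r
        - ∑ n ∈ Icc 1 (p - 1), (n : ℚ)⁻¹ ^ r := eq_sub_of_add_eq hsplit
    _ ≡ 2 * ∑ k ∈ Icc 1 ((p - 1) / 2), ((2 * k : ℕ) : ℚ)⁻¹ ^ r - 0 mod p :=
        Rat.ModEq.rfl.sub (sum_Icc_inv_pow_modEq_zero hr1 hr)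
    _ = 2 * 2⁻¹ ^ r * ∑ k ∈ Icc 1 ((p - 1) / 2), (k : ℚ)⁻¹ ^ r := by
        simp only [sub_zero, Nat.cast_mul, Nat.cast_ofNat, mul_inv, mul_pow, mul_sum, mul_assoc]

theorem sum_Icc_neg_one_pow_mul_inv_modEq (hp2 : p ≠ 2) :
    ∑ n ∈ Icc 1 (p - 1), (-1) ^ n * (n : ℚ)⁻¹ ≡ -2 * ((2 ^ (p - 1) - 1) / p) mod p := by
  have h := sum_Icc_neg_one_pow_mul_inv_pow_modEq hp2 le_rfl (r := 1)
    (by have := hp.out.two_le; omega)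
  simp only [pow_one, mul_inv_cancel₀ (two_ne_zero : (2 : ℚ) ≠ 0), one_mul] at h
  exact h.trans (sum_Icc_half_inv_modEq hp2)

theorem sum_Icc_neg_one_pow_mul_inv_pow_three_modEq (hp3 : 3 < p) :
    ∑ n ∈ Icc 1 (p - 1), (-1) ^ n * (n : ℚ)⁻¹ ^ 3 ≡ -bernoulli (p - 3) / 2 mod p := by
  have hp2 : p ≠ 2 := by omega
  have hp5 : 5 ≤ p := by
    have := Nat.odd_iff.1 (hp.out.odd_of_ne_two hp2); omega
  calc ∑ n ∈ Icc 1 (p - 1), (-1) ^ n * (n : ℚ)⁻¹ ^ 3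
      ≡ 2 * 2⁻¹ ^ 3 * ∑ k ∈ Icc 1 ((p - 1) / 2), (k : ℚ)⁻¹ ^ 3 mod p :=
        sum_Icc_neg_one_pow_mul_inv_pow_modEq hp2 (by norm_num) (by omega)
    _ ≡ 2 * 2⁻¹ ^ 3 * (-2 * bernoulli (p - 3)) mod p :=
        (sum_Icc_half_inv_pow_three_modEq hp3).mul_left
          (mul_mem (ofNat_mem _ 2) (pow_mem (inv_two_mem_pIntegers hp2) 3))
    _ = -bernoulli (p - 3) / 2 := by ring

end AlternatingSums

/-- For a prime `p > 3` with Fermat quotient `q_p(2) = (2^{p-1}-1)/p`: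
`∑_{p-1 ≥ n₁ ≥ n₂ ≥ n₃ ≥ 1} (-1)^{n₁+n₂+n₃}/(n₁n₂n₃)
  ≡ −(4/3)·q_p(2)³ − (1/6)·B_{p-3} (mod p)` in `ℤ_(p)`. -/
theorem alt_triple_star_sum_congr (p : ℕ) (hp : p.Prime) (hp3 : 3 < p) :
    haveI : Fact p.Prime := ⟨hp⟩
    ‖(((∑ n₁ ∈ Finset.Icc 1 (p - 1), ∑ n₂ ∈ Finset.Icc 1 n₁, ∑ n₃ ∈ Finset.Icc 1 n₂,
          (-1 : ℚ) ^ (n₁ + n₂ + n₃) / (n₁ * n₂ * n₃))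
        - (-(4 / 3) * ((2 ^ (p - 1) - 1 : ℚ) / p) ^ 3
            - 1 / 6 * bernoulli' (p - 3)) : ℚ) : ℚ_[p])‖
      ≤ (p : ℝ) ^ (-1 : ℤ) := by
  have : Fact p.Prime := ⟨hp⟩
  have hp2 : p ≠ 2 := by omega
  have hodd := Nat.odd_iff.1 (hp.odd_of_ne_two hp2)
  set q : ℚ := (2 ^ (p - 1) - 1) / p
  set P₁ := ∑ n ∈ Icc 1 (p - 1), (-1) ^ n * (n : ℚ)⁻¹
  have hP₁ : P₁ ∈ pIntegers p := sum_mem fun n hn => mul_mem (pow_mem (neg_mem (one_mem _)) n)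
    (inv_natCast_mem_pIntegers_of_lt (by have := (mem_Icc.1 hn).2; omega))
  have h6 : ¬p ∣ 6 := fun h => by
    have := Nat.le_of_dvd (by norm_num) h
    interval_cases p <;> omega
  have hP₁' := sum_Icc_neg_one_pow_mul_inv_modEq hp2
  have hH₂ := sum_Icc_inv_pow_modEq_zero (p := p) (r := 2) (by norm_num) (by omega)
  have hP₃ := sum_Icc_neg_one_pow_mul_inv_pow_three_modEq hp3
  have hq : -2 * q ∈ pIntegers p :=
    mul_mem (neg_mem (ofNat_mem _ 2)) (fermatQuotient_two_mem_pIntegers hp2)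
  have hmain : 6 * ∑ n₁ ∈ Icc 1 (p - 1), ∑ n₂ ∈ Icc 1 n₁, ∑ n₃ ∈ Icc 1 n₂,
        (-1 : ℚ) ^ (n₁ + n₂ + n₃) / (n₁ * n₂ * n₃)
      ≡ 6 * (-(4 / 3) * q ^ 3 - 1 / 6 * bernoulli (p - 3)) mod p := by
    rw [six_mul_sum_Icc_sum_Icc_sum_Icc_neg_one_pow_div]
    calc _ ≡ (-2 * q) ^ 3 + 3 * P₁ * 0 + 2 * (-bernoulli (p - 3) / 2) mod p :=
          ((hP₁'.pow hP₁ hq 3).add (hH₂.mul_left (mul_mem (ofNat_mem _ 3) hP₁))).add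
            (hP₃.mul_left (ofNat_mem _ 2))
      _ = 6 * (-(4 / 3) * q ^ 3 - 1 / 6 * bernoulli (p - 3)) := by ring
  rw [zpow_neg_one, ← bernoulli_eq_bernoulli'_of_ne_one (by omega)]
  exact (hmain.cancel_left (by norm_num)
    (by exact_mod_cast inv_natCast_mem_pIntegers h6)).norm_sub_le
end
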